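/- Let F₂ be the 2-dimensional simplicial complex on vertex set {1,2,3,4,5,6} whose maximal edges are {1,2,3}, {4,5,6}, {1,4}, {1,5}, {1,6}. Then F₂ is non-trivial, and ex(n,F₂) = n³/27 + o(n³) as n → ∞. -/

import Mathlib

open Filter Asymptotics

/-- A finite hypergraph with vertices in `ℕ`. -/
structure NHypergraph where
  verts : Finset ℕ
  edges : Finset (Finset ℕ)
  subset_verts : ∀ e ∈ edges, e ⊆ verts

namespace NHypergraph

/-- `G` is `k`-uniform if every edge has exactly `k` vertices. -/
def IsUniform (G : NHypergraph) (k : ℕ) : Prop := ∀ e ∈ G.edges, e.card = k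

/-- `H` contains a copy of `F`: an injection of `V(F)` into `V(H)` mapping
every edge of `F` to an edge of `H`. -/
def ContainsCopy (H F : NHypergraph) : Prop :=
  ∃ f : ℕ → ℕ, Set.InjOn f ↑F.verts ∧ (∀ v ∈ F.verts, f v ∈ H.verts) ∧
    ∀ e ∈ F.edges, e.image f ∈ H.edges

/-- `F` is isomorphic to `G`. -/
def IsIsoTo (F G : NHypergraph) : Prop :=
  ∃ f : ℕ → ℕ, Set.InjOn f ↑F.verts ∧ F.verts.image f = G.verts ∧
    F.edges.image (Finset.image f) = G.edges

/-- The `s`-th layer `F^s`: the `s`-uniform hypergraph on `V(F)` consisting of all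
`s`-element edges of `F`. -/
def layer (F : NHypergraph) (s : ℕ) : NHypergraph where
  verts := F.verts
  edges := F.edges.filter fun e => e.card = s
  subset_verts := fun e he => F.subset_verts e (Finset.mem_filter.mp he).1

/-- The set of maximal edges (the generating set) of `F`. -/
def maximalEdges (F : NHypergraph) : Finset (Finset ℕ) :=
  F.edges.filter fun e => ∀ e' ∈ F.edges, e ⊆ e' → e = e'

/-- `T` forms a clique in the `k`-uniform hypergraph `G`: `T` is a singleton,
`T` is a subset of some edge, or every `k`-element subset of `T` is an edge. -/
def IsCliqueIn (G : NHypergraph) (k : ℕ) (T : Finset ℕ) : Prop :=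
  T ⊆ G.verts ∧ (T.card = 1 ∨ (∃ e ∈ G.edges, T ⊆ e) ∨
    ∀ S ∈ T.powersetCard k, S ∈ G.edges)

/-- The number of cliques in `G` (viewed as a `k`-uniform hypergraph). -/
noncomputable def cliqueCount (G : NHypergraph) (k : ℕ) : ℕ :=
  Set.ncard {T : Finset ℕ | G.IsCliqueIn k T}

/-- The number of cliques of order at least `k` in `G`. -/
noncomputable def cliquePlusCount (G : NHypergraph) (k : ℕ) : ℕ :=
  Set.ncard {T : Finset ℕ | G.IsCliqueIn k T ∧ k ≤ T.card}

/-- `F` is `d`-dimensional: the maximum edge size is `d + 1`. -/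
def IsDimensional (F : NHypergraph) (d : ℕ) : Prop :=
  (∀ e ∈ F.edges, e.card ≤ d + 1) ∧ ∃ e ∈ F.edges, e.card = d + 1

/-- `H` is edge-degenerate: its edges can be ordered `e₁, …, eₘ` so that for every
`i ≥ 2` there is `j < i` with `eᵢ ∩ (e₁ ∪ ⋯ ∪ e_{i-1}) ⊆ eⱼ`. -/
def EdgeDegenerate (H : NHypergraph) : Prop :=
  ∃ l : List (Finset ℕ), l.Nodup ∧ l.toFinset = H.edges ∧
    ∀ i : Fin l.length, 1 ≤ (i : ℕ) →
      ∃ j : Fin l.length, (j : ℕ) < (i : ℕ) ∧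
        l.get i ∩ (l.take (i : ℕ)).foldr (· ∪ ·) ∅ ⊆ l.get j

/-- `G` is `l`-full (as a `k`-uniform hypergraph): every `(k-1)`-element vertex subset
is contained in either none or at least `l` edges. -/
def IsFull (G : NHypergraph) (l k : ℕ) : Prop :=
  ∀ S ⊆ G.verts, S.card = k - 1 →
    (G.edges.filter fun e => S ⊆ e) = ∅ ∨ l ≤ (G.edges.filter fun e => S ⊆ e).card

end NHypergraph

/-- An abstract simplicial complex: contains the empty edge, all singletons of its
vertex set, and is closed under taking subsets. -/
def IsSimplicialComplex (H : NHypergraph) : Prop :=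
  ∅ ∈ H.edges ∧ (∀ v ∈ H.verts, {v} ∈ H.edges) ∧
    ∀ e ∈ H.edges, ∀ e', e' ⊆ e → e' ∈ H.edges

/-- `𝓓(H)`: the simplicial complex on `V(H)` whose edges are all singletons together
with all subsets of edges of `H`. -/
def downClosure (H : NHypergraph) : NHypergraph where
  verts := H.verts
  edges := insert ∅ ((H.verts.image fun v => ({v} : Finset ℕ)) ∪
    H.edges.biUnion Finset.powerset)
  subset_verts := by
    intro e he
    simp only [Finset.mem_insert, Finset.mem_union, Finset.mem_image, Finset.mem_biUnion,
      Finset.mem_powerset] at he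
    rcases he with rfl | ⟨v, hv, rfl⟩ | ⟨a, ha, hea⟩
    · exact Finset.empty_subset _
    · exact Finset.singleton_subset_iff.mpr hv
    · exact hea.trans (H.subset_verts a ha)

/-- The simplicial complex generated by a finite family `E` of edges: its vertex set is
the union of the members of `E` and its edges are all subsets of members of `E`. -/
def genComplex (E : Finset (Finset ℕ)) : NHypergraph where
  verts := E.sup id
  edges := insert ∅ (E.biUnion Finset.powerset)
  subset_verts := by
    intro e he
    simp only [Finset.mem_insert, Finset.mem_biUnion, Finset.mem_powerset] at he
    rcases he with rfl | ⟨a, ha, hea⟩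
    · exact Finset.empty_subset _
    · intro x hx
      exact Finset.mem_sup.mpr ⟨a, ha, hea hx⟩

/-- `ex(n, F)`: the maximum number of edges in an `F`-free simplicial complex
on `n` vertices. -/
noncomputable def exSC (n : ℕ) (F : NHypergraph) : ℕ :=
  sSup {m | ∃ H : NHypergraph, IsSimplicialComplex H ∧ H.verts.card = n ∧
    ¬ H.ContainsCopy F ∧ H.edges.card = m}

/-- `ex_k^{cl}(n, 𝓗)`: the maximum number of cliques in an `n`-vertex `k`-uniform
hypergraph containing no copy of any member of `𝓗`. -/
noncomputable def exCl (k n : ℕ) (HF : Set NHypergraph) : ℕ :=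
  sSup {m | ∃ G : NHypergraph, G.IsUniform k ∧ G.verts.card = n ∧
    (∀ H ∈ HF, ¬ G.ContainsCopy H) ∧ G.cliqueCount k = m}

/-- `ex_k^{cl+}(n, 𝓗)`: the maximum number of cliques of order at least `k` in an
`n`-vertex `k`-uniform hypergraph containing no copy of any member of `𝓗`. -/
noncomputable def exClPlus (k n : ℕ) (HF : Set NHypergraph) : ℕ :=
  sSup {m | ∃ G : NHypergraph, G.IsUniform k ∧ G.verts.card = n ∧
    (∀ H ∈ HF, ¬ G.ContainsCopy H) ∧ G.cliquePlusCount k = m}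

/-- `N(T, G)`: the number of copies of `T` in `G`, i.e. the number of subhypergraphs
of `G` (given by a vertex set and an edge set) that are images of `T` under an injection. -/
noncomputable def copyCount (T G : NHypergraph) : ℕ :=
  Set.ncard {p : Finset ℕ × Finset (Finset ℕ) |
    ∃ f : ℕ → ℕ, Set.InjOn f ↑T.verts ∧ (∀ v ∈ T.verts, f v ∈ G.verts) ∧
      (∀ e ∈ T.edges, e.image f ∈ G.edges) ∧
      T.verts.image f = p.1 ∧ T.edges.image (Finset.image f) = p.2}

/-- `ex_k(n, T, 𝓗)`: the maximum number of copies of `T` in an `n`-vertex `k`-uniform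
hypergraph containing no copy of any member of `𝓗`. -/
noncomputable def exGen (k n : ℕ) (T : NHypergraph) (HF : Set NHypergraph) : ℕ :=
  sSup {m | ∃ G : NHypergraph, G.IsUniform k ∧ G.verts.card = n ∧
    (∀ H ∈ HF, ¬ G.ContainsCopy H) ∧ copyCount T G = m}

/-- A `(k-1)`-dimensional simplicial complex `F` is trivial if for all sufficiently
large `n`, `ex(n,F) = ex_k^{cl+}(n, F^k) + ∑_{r=0}^{k-1} C(n,r)`. -/
def IsTrivialSC (k : ℕ) (F : NHypergraph) : Prop :=
  ∀ᶠ n in atTop, exSC n F = exClPlus k n {F.layer k} + ∑ r ∈ Finset.range k, n.choose r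

/-- The `k`-uniform matching `M^k_t` with `t` pairwise disjoint edges. -/
def matchingHG (k t : ℕ) : NHypergraph where
  verts := Finset.range (t * k)
  edges := (Finset.range t).image fun i => (Finset.range k).image fun j => i * k + j
  subset_verts := by
    intro e he
    simp only [Finset.mem_image, Finset.mem_range] at he
    obtain ⟨i, hi, rfl⟩ := he
    intro x hx
    simp only [Finset.mem_image, Finset.mem_range] at hx
    obtain ⟨j, hj, rfl⟩ := hx
    simp only [Finset.mem_range]
    calc i * k + j < i * k + k := by omega
      _ = (i + 1) * k := by ring
      _ ≤ t * k := Nat.mul_le_mul (by omega) le_rfl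

/-- The `i`-th edge of the `k`-uniform linear cycle of length `t`. -/
def cycleEdge (k t i : ℕ) : Finset ℕ :=
  (Finset.range k).image fun j => (i * (k - 1) + j) % (t * (k - 1))

/-- The `k`-uniform linear cycle `C^k_t` of length `t`. -/
def linearCycleHG (k t : ℕ) : NHypergraph where
  verts := (Finset.range t).sup (cycleEdge k t)
  edges := (Finset.range t).image (cycleEdge k t)
  subset_verts := by
    intro e he
    simp only [Finset.mem_image] at he
    obtain ⟨i, hi, rfl⟩ := he
    intro x hx
    exact Finset.mem_sup.mpr ⟨i, hi, hx⟩

/-- The `k`-uniform linear path `P^k_t` of length `t` (obtained from `C^k_{t+1}` by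
deleting one edge). -/
def linearPathHG (k t : ℕ) : NHypergraph where
  verts := (Finset.range t).sup (cycleEdge k (t + 1))
  edges := (Finset.range t).image (cycleEdge k (t + 1))
  subset_verts := by
    intro e he
    simp only [Finset.mem_image] at he
    obtain ⟨i, hi, rfl⟩ := he
    intro x hx
    exact Finset.mem_sup.mpr ⟨i, hi, hx⟩

/-- The `k`-uniform tight path `TP^k_t` of length `t`, on vertices `{0, …, k+t-2}`. -/
def tightPathHG (k t : ℕ) : NHypergraph where
  verts := Finset.range (k + t - 1)
  edges := (Finset.range t).image fun i => (Finset.range k).image fun j => i + j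
  subset_verts := by
    intro e he
    simp only [Finset.mem_image, Finset.mem_range] at he
    obtain ⟨i, hi, rfl⟩ := he
    intro x hx
    simp only [Finset.mem_image, Finset.mem_range] at hx
    obtain ⟨j, hj, rfl⟩ := hx
    simp only [Finset.mem_range]
    omega

/-- The complete `k`-uniform hypergraph `K^k_r` on `r` vertices. -/
def completeHG (k r : ℕ) : NHypergraph where
  verts := Finset.range r
  edges := (Finset.range r).powersetCard k
  subset_verts := fun _ he => (Finset.mem_powersetCard.mp he).1

/-- The star `S^k_{n,l}`: the `n`-vertex `k`-uniform hypergraph whose edges are all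
`k`-element subsets meeting a fixed set of `l` vertices. -/
def starHG (k n l : ℕ) : NHypergraph where
  verts := Finset.range n
  edges := ((Finset.range n).powersetCard k).filter fun e => ∃ v ∈ e, v < l
  subset_verts := fun _ he => (Finset.mem_powersetCard.mp (Finset.mem_filter.mp he).1).1

abbrev F2gens : Finset (Finset ℕ) := {({1,2,3} : Finset ℕ), {4,5,6}, {1,4}, {1,5}, {1,6}}
abbrev F2 : NHypergraph := genComplex F2gens

lemma F2_verts : F2.verts = {1,2,3,4,5,6} := by decide

lemma F2_mem_edges_iff {e : Finset ℕ} :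
    e ∈ F2.edges ↔ e = ∅ ∨ ∃ g ∈ F2gens, e ⊆ g := by
  constructor
  · intro h
    rcases Finset.mem_insert.mp h with rfl | h
    · exact Or.inl rfl
    · obtain ⟨g, hg, hsub⟩ := Finset.mem_biUnion.mp h
      exact Or.inr ⟨g, hg, Finset.mem_powerset.mp hsub⟩
  · intro h
    rcases h with rfl | ⟨g, hg, hsub⟩
    · simp [genComplex]
    · exact Finset.mem_insert_of_mem (Finset.mem_biUnion.mpr ⟨g, hg, Finset.mem_powerset.mpr hsub⟩)

def sixFun (v b c p q r : ℕ) : ℕ → ℕ := fun i =>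
  match i with
  | 1 => v | 2 => b | 3 => c | 4 => p | 5 => q | _ => r

lemma copy_builder {H : NHypergraph} (hH : IsSimplicialComplex H)
    {v b c p q r : ℕ}
    (hvb : v ≠ b) (hvc : v ≠ c) (hbc : b ≠ c)
    (hpq : p ≠ q) (hpr : p ≠ r) (hqr : q ≠ r)
    (hvp : v ≠ p) (hvq : v ≠ q) (hvr : v ≠ r)
    (hbp : b ≠ p) (hbq : b ≠ q) (hbr : b ≠ r)
    (hcp : c ≠ p) (hcq : c ≠ q) (hcr : c ≠ r)
    (h1 : ({v,b,c} : Finset ℕ) ∈ H.edges) (h2 : ({p,q,r} : Finset ℕ) ∈ H.edges)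
    (h3 : ({v,p} : Finset ℕ) ∈ H.edges) (h4 : ({v,q} : Finset ℕ) ∈ H.edges)
    (h5 : ({v,r} : Finset ℕ) ∈ H.edges) :
    H.ContainsCopy F2 := by
  refine ⟨sixFun v b c p q r, ?_, ?_, ?_⟩
  · intro x hx y hy hxy
    rw [F2_verts] at hx hy
    simp only [Finset.coe_insert, Set.mem_insert_iff, Finset.coe_singleton,
      Set.mem_singleton_iff] at hx hy
    rcases hx with rfl|rfl|rfl|rfl|rfl|rfl <;> rcases hy with rfl|rfl|rfl|rfl|rfl|rfl <;>
      simp_all [sixFun]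
  · intro i hi
    rw [F2_verts] at hi
    have hv : v ∈ H.verts := H.subset_verts _ h1 (by simp)
    have hb : b ∈ H.verts := H.subset_verts _ h1 (by simp)
    have hc : c ∈ H.verts := H.subset_verts _ h1 (by simp)
    have hp : p ∈ H.verts := H.subset_verts _ h2 (by simp)
    have hq : q ∈ H.verts := H.subset_verts _ h2 (by simp)
    have hr : r ∈ H.verts := H.subset_verts _ h2 (by simp)
    fin_cases hi <;> simpa [sixFun]
  · intro e he
    rw [F2_mem_edges_iff] at he
    rcases he with rfl | ⟨g, hg, hsub⟩
    · simpa using hH.1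
    have himg : e.image (sixFun v b c p q r) ⊆ g.image (sixFun v b c p q r) :=
      Finset.image_subset_image hsub
    have hgood : g.image (sixFun v b c p q r) ∈ H.edges := by
      simp only [F2gens, Finset.mem_insert, Finset.mem_singleton] at hg
      rcases hg with rfl|rfl|rfl|rfl|rfl
      · simpa [Finset.image_insert, sixFun] using h1
      · simpa [Finset.image_insert, sixFun] using h2
      · simpa [Finset.image_insert, sixFun] using h3
      · simpa [Finset.image_insert, sixFun] using h4
      · simpa [Finset.image_insert, sixFun] using h5
    exact hH.2.2 _ hgood _ himg

lemma copy_extract {H : NHypergraph} (h : H.ContainsCopy F2) :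
    ∃ f : ℕ → ℕ, Set.InjOn f ↑F2.verts ∧
      ({f 1, f 2, f 3} : Finset ℕ) ∈ H.edges ∧ ({f 4, f 5, f 6} : Finset ℕ) ∈ H.edges ∧
      ({f 1, f 4} : Finset ℕ) ∈ H.edges ∧ ({f 1, f 5} : Finset ℕ) ∈ H.edges ∧
      ({f 1, f 6} : Finset ℕ) ∈ H.edges := by
  obtain ⟨f, hinj, _, hedge⟩ := h
  refine ⟨f, hinj, ?_, ?_, ?_, ?_, ?_⟩
  · have := hedge {1,2,3} (by decide)
    simpa [Finset.image_insert] using this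
  · have := hedge {4,5,6} (by decide)
    simpa [Finset.image_insert] using this
  · have := hedge {1,4} (by decide)
    simpa [Finset.image_insert] using this
  · have := hedge {1,5} (by decide)
    simpa [Finset.image_insert] using this
  · have := hedge {1,6} (by decide)
    simpa [Finset.image_insert] using this
lemma genComplex_mem_iff {E : Finset (Finset ℕ)} {e : Finset ℕ} :
    e ∈ (genComplex E).edges ↔ e = ∅ ∨ ∃ g ∈ E, e ⊆ g := by
  constructor
  · intro h
    rcases Finset.mem_insert.mp h with rfl | h
    · exact Or.inl rfl
    · obtain ⟨g, hg, hsub⟩ := Finset.mem_biUnion.mp h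
      exact Or.inr ⟨g, hg, Finset.mem_powerset.mp hsub⟩
  · intro h
    rcases h with rfl | ⟨g, hg, hsub⟩
    · exact Finset.mem_insert_self _ _
    · exact Finset.mem_insert_of_mem (Finset.mem_biUnion.mpr ⟨g, hg, Finset.mem_powerset.mpr hsub⟩)

lemma genComplex_isSC (E : Finset (Finset ℕ)) : IsSimplicialComplex (genComplex E) := by
  refine ⟨Finset.mem_insert_self _ _, ?_, ?_⟩
  · intro v hv
    obtain ⟨e, he, hve⟩ := Finset.mem_sup.mp hv
    exact genComplex_mem_iff.mpr (Or.inr ⟨e, he, Finset.singleton_subset_iff.mpr hve⟩)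
  · intro e he e' hsub
    rcases genComplex_mem_iff.mp he with rfl | ⟨g, hg, hge⟩
    · rw [Finset.subset_empty.mp hsub]
      exact Finset.mem_insert_self _ _
    · exact genComplex_mem_iff.mpr (Or.inr ⟨g, hg, hsub.trans hge⟩)

lemma exSC_set_bddAbove (n : ℕ) (F : NHypergraph) :
    BddAbove {m | ∃ H : NHypergraph, IsSimplicialComplex H ∧ H.verts.card = n ∧
      ¬ H.ContainsCopy F ∧ H.edges.card = m} := by
  refine ⟨2 ^ n, ?_⟩
  rintro m ⟨H, _, hn, _, rfl⟩
  have hsub : H.edges ⊆ H.verts.powerset := fun e he => Finset.mem_powerset.mpr (H.subset_verts e he)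
  calc H.edges.card ≤ H.verts.powerset.card := Finset.card_le_card hsub
    _ = 2 ^ n := by rw [Finset.card_powerset, hn]

/-- generators for the lower bound construction -/
def tripGens (n : ℕ) : Finset (Finset ℕ) :=
  ((Finset.range n).image fun v => ({v} : Finset ℕ)) ∪
  (((Finset.range (n/3)) ×ˢ (Finset.range (n/3)) ×ˢ (Finset.range (n - 2*(n/3)))).image
    fun x => ({x.1, n/3 + x.2.1, 2*(n/3) + x.2.2} : Finset ℕ))

def tripComplex (n : ℕ) : NHypergraph := genComplex (tripGens n)

lemma tripGens_mem {n : ℕ} {g : Finset ℕ} (hg : g ∈ tripGens n) :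
    (∃ v < n, g = {v}) ∨ ∃ x y z : ℕ, x < n/3 ∧ y < n/3 ∧ z < n - 2*(n/3) ∧
      g = {x, n/3 + y, 2*(n/3) + z} := by
  rcases Finset.mem_union.mp hg with h | h
  · obtain ⟨v, hv, rfl⟩ := Finset.mem_image.mp h
    exact Or.inl ⟨v, Finset.mem_range.mp hv, rfl⟩
  · obtain ⟨⟨x, y, z⟩, hxyz, rfl⟩ := Finset.mem_image.mp h
    simp only [Finset.mem_product, Finset.mem_range] at hxyz
    exact Or.inr ⟨x, y, z, hxyz.1, hxyz.2.1, hxyz.2.2, rfl⟩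

lemma tripComplex_verts (n : ℕ) : (tripComplex n).verts = Finset.range n := by
  apply Finset.ext
  intro u
  constructor
  · intro hu
    obtain ⟨g, hg, hug⟩ := Finset.mem_sup.mp hu
    simp only [id_eq] at hug
    rcases tripGens_mem hg with ⟨v, hv, rfl⟩ | ⟨x, y, z, hx, hy, hz, rfl⟩
    · simp only [Finset.mem_singleton] at hug
      subst hug; exact Finset.mem_range.mpr hv
    · simp only [Finset.mem_insert, Finset.mem_singleton] at hug
      have h3 : 3 * (n/3) ≤ n := by omega
      rcases hug with rfl | rfl | rfl <;> (apply Finset.mem_range.mpr; omega)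
  · intro hu
    apply Finset.mem_sup.mpr
    refine ⟨{u}, Finset.mem_union_left _ (Finset.mem_image_of_mem _ hu), by simp⟩

/-- the region of a vertex -/
def part (a u : ℕ) : ℕ := if u < a then 0 else if u < 2*a then 1 else 2

lemma part_lt_three (a u : ℕ) : part a u < 3 := by
  unfold part; split_ifs <;> omega

lemma crossing_parts {n : ℕ} {x y z u w : ℕ} (hx : x < n/3) (hy : y < n/3)
    (hu : u ∈ ({x, n/3 + y, 2*(n/3) + z} : Finset ℕ))
    (hw : w ∈ ({x, n/3 + y, 2*(n/3) + z} : Finset ℕ)) (huw : u ≠ w) :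
    part (n/3) u ≠ part (n/3) w := by
  simp only [Finset.mem_insert, Finset.mem_singleton] at hu hw
  unfold part
  rcases hu with rfl | rfl | rfl <;> rcases hw with rfl | rfl | rfl <;> split_ifs <;> omega
lemma F2_verts_mem {i : ℕ} (h : i ∈ ({1,2,3,4,5,6} : Finset ℕ)) : i ∈ (↑F2.verts : Set ℕ) := by
  rw [F2_verts]; exact_mod_cast h

lemma tripComplex_free (n : ℕ) : ¬ (tripComplex n).ContainsCopy F2 := by
  intro h
  obtain ⟨f, hinj, h123, h456, h14, h15, h16⟩ := copy_extract h
  set a := n/3 with ha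
  have hne : ∀ i ∈ ({1,2,3,4,5,6} : Finset ℕ), ∀ j ∈ ({1,2,3,4,5,6} : Finset ℕ),
      i ≠ j → f i ≠ f j := fun i hi j hj hij hfij => hij (hinj (F2_verts_mem hi) (F2_verts_mem hj) hfij)
  have key : ∀ s : Finset ℕ, s ∈ (tripComplex n).edges → 2 ≤ s.card →
      ∃ x y z, x < a ∧ y < a ∧ z < n - 2*a ∧ s ⊆ {x, a + y, 2*a + z} := by
    intro s hs hcard
    rcases genComplex_mem_iff.mp hs with rfl | ⟨g, hg, hsub⟩
    · simp at hcard
    rcases tripGens_mem hg with ⟨v, hv, rfl⟩ | ⟨x,y,z,hx,hy,hz,rfl⟩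
    · have := Finset.card_le_card hsub
      simp only [Finset.card_singleton] at this; omega
    · exact ⟨x,y,z,hx,hy,hz,hsub⟩
  have pkey : ∀ u w : ℕ, u ≠ w → ({u, w} : Finset ℕ) ∈ (tripComplex n).edges →
      part a u ≠ part a w := by
    intro u w huw hmem
    have hcard : 2 ≤ ({u,w} : Finset ℕ).card := by
      rw [Finset.card_insert_of_notMem (by simp [huw]), Finset.card_singleton]
    obtain ⟨x,y,z,hx,hy,hz,hsub⟩ := key _ hmem hcard
    exact crossing_parts hx hy (hsub (by simp)) (hsub (by simp)) huw
  have hSC := genComplex_isSC (tripGens n)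
  have pair_mem : ∀ u w : ℕ, ({u,w} : Finset ℕ) ⊆ ({f 4, f 5, f 6} : Finset ℕ) →
      ({u,w} : Finset ℕ) ∈ (tripComplex n).edges := fun u w hsub => hSC.2.2 _ h456 _ hsub
  have p45 := pkey (f 4) (f 5) (hne 4 (by decide) 5 (by decide) (by decide))
    (pair_mem _ _ (by intro t ht; simp only [Finset.mem_insert, Finset.mem_singleton] at ht ⊢; tauto))
  have p46 := pkey (f 4) (f 6) (hne 4 (by decide) 6 (by decide) (by decide))
    (pair_mem _ _ (by intro t ht; simp only [Finset.mem_insert, Finset.mem_singleton] at ht ⊢; tauto))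
  have p56 := pkey (f 5) (f 6) (hne 5 (by decide) 6 (by decide) (by decide))
    (pair_mem _ _ (by intro t ht; simp only [Finset.mem_insert, Finset.mem_singleton] at ht ⊢; tauto))
  have p14 := pkey (f 1) (f 4) (hne 1 (by decide) 4 (by decide) (by decide)) h14
  have p15 := pkey (f 1) (f 5) (hne 1 (by decide) 5 (by decide) (by decide)) h15
  have p16 := pkey (f 1) (f 6) (hne 1 (by decide) 6 (by decide) (by decide)) h16
  have l1 := part_lt_three a (f 1)
  have l4 := part_lt_three a (f 4)
  have l5 := part_lt_three a (f 5)
  have l6 := part_lt_three a (f 6)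
  omega

lemma tripComplex_card_edges (n : ℕ) :
    (n/3)^3 ≤ (tripComplex n).edges.card := by
  set a := n/3 with ha
  have hinj : Set.InjOn (fun x : ℕ × ℕ × ℕ => ({x.1, a + x.2.1, 2*a + x.2.2} : Finset ℕ))
      ↑((Finset.range a) ×ˢ (Finset.range a) ×ˢ (Finset.range (n - 2*a))) := by
    rintro ⟨x,y,z⟩ hxyz ⟨x',y',z'⟩ hxyz' heq
    simp only [Finset.coe_product, Set.mem_prod, Finset.mem_coe, Finset.mem_range] at hxyz hxyz'
    simp only at heq
    have h1 : x ∈ ({x', a + y', 2*a + z'} : Finset ℕ) := by rw [← heq]; simp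
    have h2 : a + y ∈ ({x', a + y', 2*a + z'} : Finset ℕ) := by rw [← heq]; simp
    have h3 : 2*a + z ∈ ({x', a + y', 2*a + z'} : Finset ℕ) := by rw [← heq]; simp
    simp only [Finset.mem_insert, Finset.mem_singleton] at h1 h2 h3
    obtain ⟨hx, hy, hz⟩ := hxyz
    obtain ⟨hx', hy', hz'⟩ := hxyz'
    have hfin : x = x' ∧ y = y' ∧ z = z' := by omega
    simpa [Prod.ext_iff] using hfin
  have hsubS : ((Finset.range a ×ˢ Finset.range a ×ˢ Finset.range (n - 2*a)).image
      (fun x : ℕ×ℕ×ℕ => ({x.1, a + x.2.1, 2*a + x.2.2} : Finset ℕ))) ⊆ (tripComplex n).edges := by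
    intro e he
    obtain ⟨⟨x,y,z⟩, hx, rfl⟩ := Finset.mem_image.mp he
    simp only [Finset.mem_product, Finset.mem_range] at hx
    refine genComplex_mem_iff.mpr (Or.inr ⟨_, ?_, Finset.Subset.refl _⟩)
    exact Finset.mem_union_right _ (Finset.mem_image.mpr
      ⟨(x,y,z), by simp only [Finset.mem_product, Finset.mem_range]; exact hx, rfl⟩)
  have hle : a ≤ n - 2*a := by omega
  calc a^3 = a * (a * a) := by ring
    _ ≤ a * (a * (n - 2*a)) := Nat.mul_le_mul le_rfl (Nat.mul_le_mul le_rfl hle)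
    _ = ((Finset.range a) ×ˢ (Finset.range a) ×ˢ (Finset.range (n - 2*a))).card := by
        simp [Finset.card_product]
    _ = ((Finset.range a ×ˢ Finset.range a ×ˢ Finset.range (n - 2*a)).image
          (fun x : ℕ×ℕ×ℕ => ({x.1, a + x.2.1, 2*a + x.2.2} : Finset ℕ))).card :=
        (Finset.card_image_of_injOn hinj).symm
    _ ≤ _ := Finset.card_le_card hsubS

lemma exSC_lower (n : ℕ) : (n/3)^3 ≤ exSC n F2 := by
  have hmem : (tripComplex n).edges.card ∈ {m | ∃ H : NHypergraph, IsSimplicialComplex H ∧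
      H.verts.card = n ∧ ¬ H.ContainsCopy F2 ∧ H.edges.card = m} :=
    ⟨tripComplex n, genComplex_isSC _,
      by rw [tripComplex_verts]; exact Finset.card_range n, tripComplex_free n, rfl⟩
  exact le_trans (tripComplex_card_edges n) (le_csSup (exSC_set_bddAbove n F2) hmem)
lemma double_count {α β : Type*} (A : Finset α) (B : Finset β) (R : α → β → Prop)
    [∀ a b, Decidable (R a b)] :
    ∑ a ∈ A, (B.filter (fun b => R a b)).card = ∑ b ∈ B, (A.filter (fun a => R a b)).card := by
  simp_rw [Finset.card_filter]
  rw [Finset.sum_comm]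

/-- the other endpoint of a pair -/
def otherElt (a : ℕ) (p : Finset ℕ) : ℕ := (p.erase a).sup id

lemma pair_eq {a : ℕ} {p : Finset ℕ} (hap : a ∈ p) (hp2 : p.card = 2) :
    otherElt a p ≠ a ∧ otherElt a p ∈ p ∧ p = {a, otherElt a p} := by
  have hc1 : (p.erase a).card = 1 := by rw [Finset.card_erase_of_mem hap, hp2]
  obtain ⟨c, hc⟩ := Finset.card_eq_one.mp hc1
  have hco : otherElt a p = c := by rw [otherElt, hc]; simp
  have hcp : c ∈ p := (Finset.erase_subset a p) (hc ▸ Finset.mem_singleton_self c)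
  have hca : c ≠ a := by
    intro h; subst h; exact (Finset.notMem_erase c p) (hc ▸ Finset.mem_singleton_self c)
  rw [hco]
  refine ⟨hca, hcp, ?_⟩
  refine Finset.eq_of_subset_of_card_le (fun t ht => ?_) ?_
  · simp only [Finset.mem_insert, Finset.mem_singleton]
    by_cases hta : t = a
    · exact Or.inl hta
    · right
      have : t ∈ p.erase a := Finset.mem_erase.mpr ⟨hta, ht⟩
      rw [hc] at this; exact Finset.mem_singleton.mp this
  · rw [hp2]; exact Finset.card_insert_le _ _ |>.trans (by simp)

lemma pair_degree_eq (A : Finset ℕ) (L : Finset (Finset ℕ))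
    (hL : ∀ p ∈ L, p ⊆ A ∧ p.card = 2) (a : ℕ) :
    (L.filter (fun p => a ∈ p)).card = (A.filter (fun c => c ≠ a ∧ {a,c} ∈ L)).card := by
  apply Finset.card_bij' (fun p _ => otherElt a p) (fun c _ => ({a, c} : Finset ℕ))
  · intro p hp
    rw [Finset.mem_filter] at hp
    obtain ⟨hne, hmem, hpeq⟩ := pair_eq hp.2 (hL p hp.1).2
    rw [Finset.mem_filter]
    exact ⟨(hL p hp.1).1 hmem, hne, hpeq ▸ hp.1⟩
  · intro c hc
    rw [Finset.mem_filter] at hc ⊢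
    exact ⟨hc.2.2, Finset.mem_insert_self _ _⟩
  · intro p hp
    rw [Finset.mem_filter] at hp
    obtain ⟨hne, hmem, hpeq⟩ := pair_eq hp.2 (hL p hp.1).2
    exact hpeq.symm
  · intro c hc
    rw [Finset.mem_filter] at hc
    have he : ({a, c} : Finset ℕ).erase a = {c} := by
      apply Finset.erase_insert
      simp only [Finset.mem_singleton]
      exact Ne.symm hc.2.1
    rw [otherElt, he]; simp

lemma mantel (A : Finset ℕ) (L : Finset (Finset ℕ))
    (hL : ∀ p ∈ L, p ⊆ A ∧ p.card = 2)
    (htf : ∀ x y z : ℕ, ({x,y} : Finset ℕ) ∈ L → ({y,z} : Finset ℕ) ∈ L →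
      ({x,z} : Finset ℕ) ∈ L → x ≠ y → x ≠ z → y ≠ z → False) :
    4 * L.card ≤ A.card ^ 2 := by
  classical
  set d : ℕ → ℕ := fun x => (L.filter (fun p => x ∈ p)).card with hd
  have hsum1 : ∑ x ∈ A, d x = 2 * L.card := by
    simp only [hd]
    rw [double_count A L (fun x p => x ∈ p)]
    rw [Finset.sum_congr rfl (fun p hp => ?_), Finset.sum_const, smul_eq_mul, mul_comm]
    rw [Finset.filter_mem_eq_inter, Finset.inter_eq_right.mpr (hL p hp).1, (hL p hp).2]
  have hkey : ∀ x y : ℕ, x ≠ y → ({x,y} : Finset ℕ) ∈ L → d x + d y ≤ A.card := by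
    intro x y hxy hp
    have hdx := pair_degree_eq A L hL x
    have hdy := pair_degree_eq A L hL y
    simp only [hd]
    rw [hdx, hdy, ← Finset.card_union_of_disjoint ?hdisj]
    · exact Finset.card_le_card (Finset.union_subset (Finset.filter_subset _ _)
        (Finset.filter_subset _ _))
    case hdisj =>
      rw [Finset.disjoint_left]
      intro c hcx hcy
      rw [Finset.mem_filter] at hcx hcy
      exact htf x y c hp hcy.2.2 hcx.2.2 hxy (Ne.symm hcx.2.1) (Ne.symm hcy.2.1)
  have hsum2 : ∑ p ∈ L, (∑ x ∈ p, d x) ≤ L.card * A.card := by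
    have : ∀ p ∈ L, (∑ x ∈ p, d x) ≤ A.card := by
      intro p hp
      obtain ⟨x, y, hxy, rfl⟩ := Finset.card_eq_two.mp (hL p hp).2
      rw [Finset.sum_pair hxy]
      exact hkey x y hxy hp
    calc ∑ p ∈ L, (∑ x ∈ p, d x) ≤ L.card • A.card := Finset.sum_le_card_nsmul _ _ _ this
      _ = L.card * A.card := by rw [smul_eq_mul]
  have hsum3 : ∑ p ∈ L, (∑ x ∈ p, d x) = ∑ x ∈ A, d x * d x := by
    have h1 : ∀ p ∈ L, (∑ x ∈ p, d x) = ∑ x ∈ A, if x ∈ p then d x else 0 := by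
      intro p hp
      rw [← Finset.sum_filter, Finset.filter_mem_eq_inter,
        Finset.inter_eq_right.mpr (hL p hp).1]
    rw [Finset.sum_congr rfl h1, Finset.sum_comm]
    apply Finset.sum_congr rfl
    intro x _
    rw [← Finset.sum_filter]
    rw [Finset.sum_const, smul_eq_mul]
  have hCS := Finset.sum_mul_sq_le_sq_mul_sq A (fun _ => 1) d
  simp only [one_mul, one_pow, Finset.sum_const, smul_eq_mul, mul_one] at hCS
  rw [hsum1] at hCS
  have hsq : ∑ x ∈ A, d x ^ 2 = ∑ x ∈ A, d x * d x := by
    apply Finset.sum_congr rfl; intro x _; ring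
  rw [hsq, ← hsum3] at hCS
  have hfin : (2 * L.card)^2 ≤ A.card * (L.card * A.card) :=
    le_trans hCS (Nat.mul_le_mul_left _ hsum2)
  rcases Nat.eq_zero_or_pos L.card with h0 | hpos
  · rw [h0]; simp
  · have : L.card * (4 * L.card) ≤ L.card * A.card ^ 2 := by
      calc L.card * (4 * L.card) = (2 * L.card)^2 := by ring
        _ ≤ A.card * (L.card * A.card) := hfin
        _ = L.card * A.card ^ 2 := by ring
    exact Nat.le_of_mul_le_mul_left this hpos
lemma sup_id_mem {s : Finset ℕ} (h : s.Nonempty) : s.sup id ∈ s := by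
  rw [← Finset.sup'_eq_sup h id]; exact s.max'_mem h

lemma inter_union_sdiff' (e s : Finset ℕ) : (e ∩ s) ∪ (e \ s) = e := by
  ext x; simp only [Finset.mem_union, Finset.mem_inter, Finset.mem_sdiff]; tauto

lemma eq_triple {e : Finset ℕ} {v t w : ℕ} (h3 : e.card = 3) (hv : v ∈ e) (ht : t ∈ e)
    (hw : w ∈ e) (hvt : v ≠ t) (hvw : v ≠ w) (htw : t ≠ w) : e = {v, t, w} := by
  symm
  apply Finset.eq_of_subset_of_card_le
  · intro x hx
    simp only [Finset.mem_insert, Finset.mem_singleton] at hx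
    rcases hx with rfl | rfl | rfl <;> assumption
  · rw [h3, Finset.card_insert_of_notMem (by simp [hvt, hvw]),
      Finset.card_insert_of_notMem (by simp [htw]), Finset.card_singleton]

lemma triple_structure {e : Finset ℕ} {v : ℕ} (hv : v ∈ e) (h3 : e.card = 3) :
    ∃ b c, v ≠ b ∧ v ≠ c ∧ b ≠ c ∧ e = {v, b, c} := by
  have h2 : (e.erase v).card = 2 := by rw [Finset.card_erase_of_mem hv, h3]
  obtain ⟨b, c, hbc, heq⟩ := Finset.card_eq_two.mp h2
  have hb : b ∈ e.erase v := heq ▸ Finset.mem_insert_self _ _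
  have hc : c ∈ e.erase v := heq ▸ Finset.mem_insert_of_mem (Finset.mem_singleton_self _)
  exact ⟨b, c, Ne.symm (Finset.mem_erase.mp hb).1, Ne.symm (Finset.mem_erase.mp hc).1, hbc,
    eq_triple h3 hv (Finset.mem_of_mem_erase hb) (Finset.mem_of_mem_erase hc)
      (Ne.symm (Finset.mem_erase.mp hb).1) (Ne.symm (Finset.mem_erase.mp hc).1) hbc⟩

/-- from two disjoint triples with pairs from the first vertex of one to all of the other,
plus closure, we get a copy of F2 -/
lemma copy_of_triples {H : NHypergraph} (hH : IsSimplicialComplex H)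
    {v : ℕ} {e T : Finset ℕ} (he : e ∈ H.edges) (he3 : e.card = 3) (hve : v ∈ e)
    (hT : T ∈ H.edges) (hT3 : T.card = 3) (hdisj : ∀ x ∈ e, x ∉ T)
    (hp : ∀ u ∈ T, ({v, u} : Finset ℕ) ∈ H.edges) : H.ContainsCopy F2 := by
  obtain ⟨b, c, hvb, hvc, hbc, hebc⟩ := triple_structure hve he3
  obtain ⟨p, q, r, hpq, hpr, hqr, hTpqr⟩ := Finset.card_eq_three.mp hT3
  have hpT : p ∈ T := hTpqr ▸ by simp
  have hqT : q ∈ T := hTpqr ▸ by simp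
  have hrT : r ∈ T := hTpqr ▸ by simp
  have hbe : b ∈ e := hebc ▸ by simp
  have hce : c ∈ e := hebc ▸ by simp
  exact copy_builder hH hvb hvc hbc hpq hpr hqr
    (fun h => hdisj v hve (h ▸ hpT)) (fun h => hdisj v hve (h ▸ hqT)) (fun h => hdisj v hve (h ▸ hrT))
    (fun h => hdisj b hbe (h ▸ hpT)) (fun h => hdisj b hbe (h ▸ hqT)) (fun h => hdisj b hbe (h ▸ hrT))
    (fun h => hdisj c hce (h ▸ hpT)) (fun h => hdisj c hce (h ▸ hqT)) (fun h => hdisj c hce (h ▸ hrT))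
    (hebc ▸ he) (hTpqr ▸ hT) (hp p hpT) (hp q hqT) (hp r hrT)

/-- F2-free complexes have no edges of size ≥ 6 -/
lemma edge_card_le_five {H : NHypergraph} (hH : IsSimplicialComplex H)
    (hfree : ¬ H.ContainsCopy F2) {e : Finset ℕ} (he : e ∈ H.edges) : e.card ≤ 5 := by
  by_contra hgt
  push_neg at hgt
  obtain ⟨T, hTe, hT3⟩ := Finset.exists_subset_card_eq (show 3 ≤ e.card by omega)
  have h3 : 3 ≤ (e \ T).card := by
    rw [Finset.card_sdiff_of_subset hTe, hT3]; omega
  obtain ⟨B, hBe, hB3⟩ := Finset.exists_subset_card_eq h3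
  have hBe' : B ⊆ e := hBe.trans (Finset.sdiff_subset)
  obtain ⟨v, hvB⟩ := Finset.card_pos.mp (by omega : 0 < B.card)
  apply hfree
  apply copy_of_triples hH (hH.2.2 e he B hBe') hB3 hvB (hH.2.2 e he T hTe) hT3
  · intro x hx hxT
    exact (Finset.mem_sdiff.mp (hBe hx)).2 hxT
  · intro u huT
    apply hH.2.2 e he
    intro x hx
    simp only [Finset.mem_insert, Finset.mem_singleton] at hx
    rcases hx with rfl | rfl
    · exact hBe' hvB
    · exact hTe huT

/-- if every triple in the link of v meets each fully-pair-connected triple T,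
the 3-degree of v is at most 3n -/
lemma deg_bound {H : NHypergraph} (hH : IsSimplicialComplex H)
    (hfree : ¬ H.ContainsCopy F2) {v : ℕ} {T : Finset ℕ}
    (hT : T ∈ H.edges) (hT3 : T.card = 3) (hvT : v ∉ T)
    (hTN : ∀ u ∈ T, ({v, u} : Finset ℕ) ∈ H.edges) :
    ((H.edges.filter (fun e => e.card = 3)).filter (fun e => v ∈ e)).card
      ≤ 3 * H.verts.card := by
  classical
  set E3v := (H.edges.filter (fun e => e.card = 3)).filter (fun e => v ∈ e) with hE3v
  have hmeet : ∀ e ∈ E3v, (e ∩ T).Nonempty := by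
    intro e he
    rw [hE3v, Finset.mem_filter, Finset.mem_filter] at he
    obtain ⟨⟨heE, he3⟩, hve⟩ := he
    by_contra hempty
    rw [Finset.not_nonempty_iff_eq_empty] at hempty
    apply hfree
    apply copy_of_triples hH heE he3 hve hT hT3 ?_ hTN
    intro x hx hxT
    exact (Finset.eq_empty_iff_forall_notMem.mp hempty x) (Finset.mem_inter.mpr ⟨hx, hxT⟩)
  have hmap : ∀ e ∈ E3v, ((e ∩ T).sup id, ((e.erase v).erase ((e ∩ T).sup id)).sup id)
      ∈ T ×ˢ H.verts := by
    intro e he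
    have hne := hmeet e he
    rw [hE3v, Finset.mem_filter, Finset.mem_filter] at he
    obtain ⟨⟨heE, he3⟩, hve⟩ := he
    have htmem := sup_id_mem hne
    rw [Finset.mem_inter] at htmem
    have htv : (e ∩ T).sup id ≠ v := fun h => hvT (h ▸ htmem.2)
    have hmem2 : (e ∩ T).sup id ∈ e.erase v := Finset.mem_erase.mpr ⟨htv, htmem.1⟩
    have hcard : ((e.erase v).erase ((e ∩ T).sup id)).card = 1 := by
      rw [Finset.card_erase_of_mem hmem2, Finset.card_erase_of_mem hve, he3]
    have hne2 : ((e.erase v).erase ((e ∩ T).sup id)).Nonempty := by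
      rw [← Finset.card_pos, hcard]; omega
    have hwmem := sup_id_mem hne2
    refine Finset.mem_product.mpr ⟨htmem.2, ?_⟩
    exact H.subset_verts e heE (Finset.mem_of_mem_erase (Finset.mem_of_mem_erase hwmem))
  have hinj : ∀ e₁ ∈ E3v, ∀ e₂ ∈ E3v,
      ((e₁ ∩ T).sup id, ((e₁.erase v).erase ((e₁ ∩ T).sup id)).sup id)
      = ((e₂ ∩ T).sup id, ((e₂.erase v).erase ((e₂ ∩ T).sup id)).sup id) → e₁ = e₂ := by
    have struct : ∀ e ∈ E3v, e = {v, (e ∩ T).sup id,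
        ((e.erase v).erase ((e ∩ T).sup id)).sup id} := by
      intro e he
      have hne := hmeet e he
      rw [hE3v, Finset.mem_filter, Finset.mem_filter] at he
      obtain ⟨⟨heE, he3⟩, hve⟩ := he
      have htmem := sup_id_mem hne
      rw [Finset.mem_inter] at htmem
      have htv : (e ∩ T).sup id ≠ v := fun h => hvT (h ▸ htmem.2)
      have hmem2 : (e ∩ T).sup id ∈ e.erase v := Finset.mem_erase.mpr ⟨htv, htmem.1⟩
      have hcard : ((e.erase v).erase ((e ∩ T).sup id)).card = 1 := by
        rw [Finset.card_erase_of_mem hmem2, Finset.card_erase_of_mem hve, he3]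
      have hne2 : ((e.erase v).erase ((e ∩ T).sup id)).Nonempty := by
        rw [← Finset.card_pos, hcard]; omega
      have hwmem := sup_id_mem hne2
      have hw1 := Finset.mem_erase.mp hwmem
      have hw2 := Finset.mem_erase.mp (Finset.mem_of_mem_erase hwmem)
      exact eq_triple he3 hve htmem.1 (Finset.mem_of_mem_erase (Finset.mem_of_mem_erase hwmem))
        (Ne.symm htv) (Ne.symm hw2.1) (Ne.symm hw1.1)
    intro e₁ h₁ e₂ h₂ heq
    have h1 := congrArg Prod.fst heq
    have h2 := congrArg Prod.snd heq
    simp only at h1 h2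
    rw [struct e₁ h₁, struct e₂ h₂, h2, h1]
  calc E3v.card ≤ (T ×ˢ H.verts).card := Finset.card_le_card_of_injOn _ hmap hinj
    _ = 3 * H.verts.card := by rw [Finset.card_product, hT3]
lemma card3_ne {u x y : ℕ} (h : ({u,x,y} : Finset ℕ).card = 3) : u ≠ x ∧ u ≠ y ∧ x ≠ y := by
  refine ⟨?_, ?_, ?_⟩ <;> rintro rfl
  · have he : ({u,u,y} : Finset ℕ) = {u,y} := by ext t; simp
    rw [he] at h
    have := Finset.card_insert_le u ({y} : Finset ℕ)
    simp at this; omega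
  · have he : ({u,x,u} : Finset ℕ) = {u,x} := by ext t; simp; tauto
    rw [he] at h
    have := Finset.card_insert_le u ({x} : Finset ℕ)
    simp at this; omega
  · have he : ({u,x,x} : Finset ℕ) = {u,x} := by ext t; simp
    rw [he] at h
    have := Finset.card_insert_le u ({x} : Finset ℕ)
    simp at this; omega

lemma cube_bound {x s w : ℕ} (h : s + x ≤ w) : 27 * (x^2 * s) ≤ 4 * w^3 := by
  have h1 : 27 * (x^2 * s) ≤ 27 * (x^2 * (w - x)) := by
    apply Nat.mul_le_mul_left
    exact Nat.mul_le_mul_left _ (by omega)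
  refine le_trans h1 ?_
  have hx : x ≤ w := by omega
  zify [hx]
  nlinarith [mul_nonneg (sq_nonneg ((x:ℤ) - 2*((w:ℤ) - x)))
    (by push_cast; omega : (0:ℤ) ≤ 4*(x:ℤ) + ((w:ℤ) - x))]

lemma core_bound {H : NHypergraph} (hH : IsSimplicialComplex H)
    (hfree : ¬ H.ContainsCopy F2) :
    ∃ w m3 : ℕ, w ≤ H.verts.card ∧ m3 ≤ w ^ 3 ∧ 27 * ((w - 3) * m3) ≤ w ^ 4 ∧
      H.edges.card ≤ m3 + 13 * (H.verts.card + 1) ^ 2 := by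
  classical
  set V := H.verts with hV
  set n := V.card with hn
  set E3 := H.edges.filter (fun e => e.card = 3) with hE3
  set deg : ℕ → ℕ := fun v => (E3.filter (fun e => v ∈ e)).card with hdeg
  set W := V.filter (fun v => 3 * n < deg v) with hW
  set E3W := E3.filter (fun e => e ⊆ W) with hE3W
  have getE : ∀ s : Finset ℕ, s ∈ E3W → s ∈ H.edges ∧ s.card = 3 ∧ s ⊆ W := by
    intro s hs
    rw [hE3W, Finset.mem_filter, hE3, Finset.mem_filter] at hs
    exact ⟨hs.1.1, hs.1.2, hs.2⟩
  have key2 : ∀ v ∈ W, ∀ T ∈ E3, v ∉ T → ∃ u ∈ T, ({v, u} : Finset ℕ) ∉ H.edges := by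
    intro v hv T hT hvT
    by_contra hcon
    push_neg at hcon
    rw [hE3, Finset.mem_filter] at hT
    have hb := deg_bound hH hfree hT.1 hT.2 hvT hcon
    rw [hW, Finset.mem_filter] at hv
    have h2 := hv.2
    rw [hdeg] at h2
    simp only [hE3] at h2
    rw [hn, hV] at h2
    omega
  have hW3 : ∀ u x y z : ℕ, x ≠ y → x ≠ z → y ≠ z →
      ({u,x,y} : Finset ℕ) ∈ E3W → ({u,y,z} : Finset ℕ) ∈ E3W →
      ({u,x,z} : Finset ℕ) ∈ E3W → False := by
    intro u x y z hxy hxz hyz h1 h2 h3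
    have g1 := getE _ h1
    have g2 := getE _ h2
    have g3 := getE _ h3
    obtain ⟨hux, huy, _⟩ := card3_ne g1.2.1
    obtain ⟨_, huz, _⟩ := card3_ne g2.2.1
    have hxW : x ∈ W := g1.2.2 (by simp)
    have hTE3 : ({u,y,z} : Finset ℕ) ∈ E3 := by
      rw [hE3, Finset.mem_filter]; exact ⟨g2.1, g2.2.1⟩
    have hxT : x ∉ ({u,y,z} : Finset ℕ) := by
      simp only [Finset.mem_insert, Finset.mem_singleton]
      push_neg
      exact ⟨Ne.symm hux, hxy, hxz⟩
    obtain ⟨u', hu'T, hpair⟩ := key2 x hxW _ hTE3 hxT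
    simp only [Finset.mem_insert, Finset.mem_singleton] at hu'T
    rcases hu'T with rfl | rfl | rfl
    · exact hpair (hH.2.2 _ g1.1 _ (by intro t ht; simp only [Finset.mem_insert,
        Finset.mem_singleton] at ht ⊢; tauto))
    · exact hpair (hH.2.2 _ g1.1 _ (by intro t ht; simp only [Finset.mem_insert,
        Finset.mem_singleton] at ht ⊢; tauto))
    · exact hpair (hH.2.2 _ g3.1 _ (by intro t ht; simp only [Finset.mem_insert,
        Finset.mem_singleton] at ht ⊢; tauto))
  have hdegW : ∀ u : ℕ, 4 * ((E3W.filter (fun e => u ∈ e)).card)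
      ≤ (((V.filter (fun c => c ≠ u ∧ ({u,c} : Finset ℕ) ∈ H.edges)) ∩ W).card) ^ 2 := by
    intro u
    set A := (V.filter (fun c => c ≠ u ∧ ({u,c} : Finset ℕ) ∈ H.edges)) ∩ W with hA
    set L := (E3W.filter (fun e => u ∈ e)).image (fun e => e.erase u) with hL
    have hcardL : L.card = (E3W.filter (fun e => u ∈ e)).card := by
      rw [hL]
      apply Finset.card_image_of_injOn
      intro e₁ h₁ e₂ h₂ heq
      simp only at heq
      have hu₁ : u ∈ e₁ := (Finset.mem_filter.mp h₁).2
      have hu₂ : u ∈ e₂ := (Finset.mem_filter.mp h₂).2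
      rw [← Finset.insert_erase hu₁, ← Finset.insert_erase hu₂, heq]
    rw [← hcardL]
    apply mantel A L
    · intro p hp
      rw [hL] at hp
      obtain ⟨e, he, rfl⟩ := Finset.mem_image.mp hp
      rw [Finset.mem_filter] at he
      have hgs := getE _ he.1
      constructor
      · intro c hc
        rw [Finset.mem_erase] at hc
        rw [hA, Finset.mem_inter, Finset.mem_filter]
        refine ⟨⟨hV ▸ H.subset_verts _ hgs.1 hc.2, hc.1, ?_⟩, hgs.2.2 hc.2⟩
        apply hH.2.2 _ hgs.1
        intro t ht
        simp only [Finset.mem_insert, Finset.mem_singleton] at ht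
        rcases ht with rfl | rfl
        · exact he.2
        · exact hc.2
      · rw [Finset.card_erase_of_mem he.2, hgs.2.1]
    · intro x y z hxyL hyzL hxzL hxy hxz hyz
      have hrec : ∀ a b : ℕ, ({a,b} : Finset ℕ) ∈ L → ({u,a,b} : Finset ℕ) ∈ E3W := by
        intro a b hab
        rw [hL] at hab
        obtain ⟨e, he, heq⟩ := Finset.mem_image.mp hab
        rw [Finset.mem_filter] at he
        have heeq : ({u,a,b} : Finset ℕ) = e := by
          show insert u ({a,b} : Finset ℕ) = e
          rw [← heq, Finset.insert_erase he.2]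
        rw [heeq]
        exact he.1
      exact hW3 u x y z hxy hxz hyz (hrec x y hxyL) (hrec y z hyzL) (hrec x z hxzL)
  refine ⟨W.card, E3W.card, Finset.card_filter_le _ _, ?_, ?_, ?_⟩
  · have hsub : E3W ⊆ W.powersetCard 3 := by
      intro e he
      have := getE _ he
      exact Finset.mem_powersetCard.mpr ⟨this.2.2, this.2.1⟩
    calc E3W.card ≤ (W.powersetCard 3).card := Finset.card_le_card hsub
      _ = W.card.choose 3 := Finset.card_powersetCard _ _
      _ ≤ W.card ^ 3 := Nat.choose_le_pow _ _
  · -- main count : 27 * ((w-3) * m*) ≤ w^4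
    have hsum3m : ∑ v ∈ W, (E3W.filter (fun e => v ∈ e)).card = 3 * E3W.card := by
      rw [double_count W E3W (fun v e => v ∈ e)]
      rw [Finset.sum_congr rfl (fun e he => ?_), Finset.sum_const, smul_eq_mul, mul_comm]
      rw [Finset.filter_mem_eq_inter, Finset.inter_eq_right.mpr (getE _ he).2.2,
        (getE _ he).2.1]
    have hsplit : (∑ v ∈ W, (E3W.filter (fun e => v ∉ e)).card) + 3 * E3W.card
        = W.card * E3W.card := by
      rw [← hsum3m, ← Finset.sum_add_distrib]
      rw [Finset.sum_congr rfl (fun v _ => ?_), Finset.sum_const, smul_eq_mul]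
      rw [add_comm]
      exact Finset.card_filter_add_card_filter_not (fun e => v ∈ e)
    have hXbound : (∑ v ∈ W, (E3W.filter (fun e => v ∉ e)).card) ≤
        ∑ u ∈ W, (E3W.filter (fun e => u ∈ e)).card *
          (W.filter (fun v => u ≠ v ∧ ({v,u} : Finset ℕ) ∉ H.edges)).card := by
      have h1 : ∀ v ∈ W, (E3W.filter (fun e => v ∉ e)).card ≤
          ∑ u ∈ W.filter (fun u => u ≠ v ∧ ({v,u} : Finset ℕ) ∉ H.edges),
            (E3W.filter (fun e => u ∈ e)).card := by
        intro v hv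
        have hsub : E3W.filter (fun e => v ∉ e) ⊆
            (W.filter (fun u => u ≠ v ∧ ({v,u} : Finset ℕ) ∉ H.edges)).biUnion
              (fun u => E3W.filter (fun e => u ∈ e)) := by
          intro e he
          rw [Finset.mem_filter] at he
          have hg := getE _ he.1
          have hTE3 : e ∈ E3 := by rw [hE3, Finset.mem_filter]; exact ⟨hg.1, hg.2.1⟩
          obtain ⟨u, huT, hpair⟩ := key2 v hv e hTE3 he.2
          apply Finset.mem_biUnion.mpr
          exact ⟨u, Finset.mem_filter.mpr ⟨hg.2.2 huT, fun h => he.2 (h ▸ huT), hpair⟩,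
            Finset.mem_filter.mpr ⟨he.1, huT⟩⟩
        exact le_trans (Finset.card_le_card hsub) Finset.card_biUnion_le
      calc (∑ v ∈ W, (E3W.filter (fun e => v ∉ e)).card)
          ≤ ∑ v ∈ W, ∑ u ∈ W.filter (fun u => u ≠ v ∧ ({v,u} : Finset ℕ) ∉ H.edges),
              (E3W.filter (fun e => u ∈ e)).card := Finset.sum_le_sum h1
        _ = ∑ v ∈ W, ∑ u ∈ W, if u ≠ v ∧ ({v,u} : Finset ℕ) ∉ H.edges then
              (E3W.filter (fun e => u ∈ e)).card else 0 := by
            exact Finset.sum_congr rfl (fun v _ => Finset.sum_filter _ _)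
        _ = ∑ u ∈ W, ∑ v ∈ W, if u ≠ v ∧ ({v,u} : Finset ℕ) ∉ H.edges then
              (E3W.filter (fun e => u ∈ e)).card else 0 := Finset.sum_comm
        _ = ∑ u ∈ W, (E3W.filter (fun e => u ∈ e)).card *
              (W.filter (fun v => u ≠ v ∧ ({v,u} : Finset ℕ) ∉ H.edges)).card := by
            refine Finset.sum_congr rfl (fun u _ => ?_)
            rw [← Finset.sum_filter, Finset.sum_const, smul_eq_mul, mul_comm]
    have hcompl : ∀ u ∈ W, (W.filter (fun v => u ≠ v ∧ ({v,u} : Finset ℕ) ∉ H.edges)).card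
        + ((V.filter (fun c => c ≠ u ∧ ({u,c} : Finset ℕ) ∈ H.edges)) ∩ W).card
        ≤ W.card := by
      intro u _
      rw [← Finset.card_union_of_disjoint ?hd]
      case hd =>
        rw [Finset.disjoint_left]
        intro v hv1 hv2
        rw [Finset.mem_filter] at hv1
        rw [Finset.mem_inter, Finset.mem_filter] at hv2
        exact hv1.2.2 (Finset.pair_comm v u ▸ hv2.1.2.2)
      apply Finset.card_le_card
      apply Finset.union_subset (Finset.filter_subset _ _) Finset.inter_subset_right
    have h108 : 108 * (∑ v ∈ W, (E3W.filter (fun e => v ∉ e)).card) ≤ 4 * W.card ^ 4 := by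
      calc 108 * (∑ v ∈ W, (E3W.filter (fun e => v ∉ e)).card)
          ≤ 108 * ∑ u ∈ W, (E3W.filter (fun e => u ∈ e)).card *
              (W.filter (fun v => u ≠ v ∧ ({v,u} : Finset ℕ) ∉ H.edges)).card :=
            Nat.mul_le_mul_left _ hXbound
        _ = ∑ u ∈ W, 108 * ((E3W.filter (fun e => u ∈ e)).card *
              (W.filter (fun v => u ≠ v ∧ ({v,u} : Finset ℕ) ∉ H.edges)).card) :=
            Finset.mul_sum _ _ _
        _ ≤ ∑ u ∈ W, 4 * W.card ^ 3 := by
            refine Finset.sum_le_sum (fun u hu => ?_)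
            have hd := hdegW u
            have hc := hcompl u hu
            calc 108 * ((E3W.filter (fun e => u ∈ e)).card *
                  (W.filter (fun v => u ≠ v ∧ ({v,u} : Finset ℕ) ∉ H.edges)).card)
                = 27 * ((4 * (E3W.filter (fun e => u ∈ e)).card) *
                  (W.filter (fun v => u ≠ v ∧ ({v,u} : Finset ℕ) ∉ H.edges)).card) := by ring
              _ ≤ 27 * ((((V.filter (fun c => c ≠ u ∧ ({u,c} : Finset ℕ) ∈ H.edges)) ∩ W).card ^ 2) *
                  (W.filter (fun v => u ≠ v ∧ ({v,u} : Finset ℕ) ∉ H.edges)).card) := by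
                  apply Nat.mul_le_mul_left
                  exact Nat.mul_le_mul_right _ hd
              _ ≤ 4 * W.card ^ 3 := cube_bound (by omega)
        _ = W.card * (4 * W.card ^ 3) := by rw [Finset.sum_const, smul_eq_mul]
        _ = 4 * W.card ^ 4 := by ring
    have hX27 : 27 * (∑ v ∈ W, (E3W.filter (fun e => v ∉ e)).card) ≤ W.card ^ 4 := by
      have : 4 * (27 * (∑ v ∈ W, (E3W.filter (fun e => v ∉ e)).card)) ≤ 4 * W.card ^ 4 := by
        calc 4 * (27 * _) = 108 * (∑ v ∈ W, (E3W.filter (fun e => v ∉ e)).card) := by ring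
          _ ≤ 4 * W.card ^ 4 := h108
      omega
    have hle : (W.card - 3) * E3W.card ≤ ∑ v ∈ W, (E3W.filter (fun e => v ∉ e)).card := by
      rw [Nat.sub_mul]
      rw [Nat.sub_le_iff_le_add]
      rw [← hsplit]
    calc 27 * ((W.card - 3) * E3W.card)
        ≤ 27 * (∑ v ∈ W, (E3W.filter (fun e => v ∉ e)).card) := Nat.mul_le_mul_left _ hle
      _ ≤ W.card ^ 4 := hX27
  · -- size decomposition
    have hA1 : (H.edges.filter (fun e => e.card ≤ 2)).card ≤ 1 + n + n^2 := by
      have hsub : H.edges.filter (fun e => e.card ≤ 2) ⊆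
          insert ∅ ((V.powersetCard 1) ∪ (V.powersetCard 2)) := by
        intro e he
        rw [Finset.mem_filter] at he
        rcases Nat.lt_or_ge e.card 1 with h0 | h1
        · have he0 : e = ∅ := Finset.card_eq_zero.mp (by omega)
          rw [he0]; exact Finset.mem_insert_self _ _
        · apply Finset.mem_insert_of_mem
          rcases Nat.eq_or_lt_of_le h1 with h1' | h2
          · exact Finset.mem_union_left _
              (Finset.mem_powersetCard.mpr ⟨hV ▸ H.subset_verts _ he.1, h1'.symm⟩)
          · exact Finset.mem_union_right _
              (Finset.mem_powersetCard.mpr ⟨hV ▸ H.subset_verts _ he.1, by omega⟩)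
      have e1 : (V.powersetCard 1).card = n := by
        rw [Finset.card_powersetCard, ← hn, Nat.choose_one_right]
      have e2 : (V.powersetCard 2).card ≤ n^2 := by
        rw [Finset.card_powersetCard, ← hn]
        exact Nat.choose_le_pow _ _
      calc (H.edges.filter (fun e => e.card ≤ 2)).card
          ≤ (insert ∅ ((V.powersetCard 1) ∪ (V.powersetCard 2))).card :=
            Finset.card_le_card hsub
        _ ≤ ((V.powersetCard 1) ∪ (V.powersetCard 2)).card + 1 := Finset.card_insert_le _ _
        _ ≤ ((V.powersetCard 1).card + (V.powersetCard 2).card) + 1 := by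
            have := Finset.card_union_le (V.powersetCard 1) (V.powersetCard 2)
            omega
        _ ≤ 1 + n + n^2 := by omega
    have hE3count : E3.card ≤ E3W.card + 3 * n^2 := by
      have hneg : (E3.filter (fun e => ¬ e ⊆ W)).card ≤ 3 * n^2 := by
        have hsub : E3.filter (fun e => ¬ e ⊆ W) ⊆
            (V \ W).biUnion (fun v => E3.filter (fun e => v ∈ e)) := by
          intro e he
          rw [Finset.mem_filter] at he
          obtain ⟨u, hue, huW⟩ := Finset.not_subset.mp he.2
          have heE : e ∈ H.edges := (Finset.mem_filter.mp he.1).1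
          apply Finset.mem_biUnion.mpr
          exact ⟨u, Finset.mem_sdiff.mpr ⟨hV ▸ H.subset_verts _ heE hue, huW⟩,
            Finset.mem_filter.mpr ⟨he.1, hue⟩⟩
        calc (E3.filter (fun e => ¬ e ⊆ W)).card
            ≤ ∑ v ∈ V \ W, (E3.filter (fun e => v ∈ e)).card :=
              le_trans (Finset.card_le_card hsub) Finset.card_biUnion_le
          _ ≤ (V \ W).card * (3 * n) := by
              apply Finset.sum_le_card_nsmul
              intro v hv
              rw [Finset.mem_sdiff] at hv
              have : ¬ (3 * n < deg v) := by
                intro hcon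
                exact hv.2 (by rw [hW, Finset.mem_filter]; exact ⟨hv.1, hcon⟩)
              rw [hdeg] at this
              simp only at this
              omega
          _ ≤ n * (3 * n) := by
              apply Nat.mul_le_mul_right
              calc (V \ W).card ≤ V.card := Finset.card_le_card (Finset.sdiff_subset)
                _ = n := hn.symm
          _ = 3 * n^2 := by ring
      have := Finset.card_filter_add_card_filter_not
        (s := E3) (p := fun e => e ⊆ W)
      rw [hE3W]
      omega
    have hA3 : (H.edges.filter (fun e => 4 ≤ e.card)).card ≤ 4 * (n * (n+1)) := by
      set A3 := H.edges.filter (fun e => 4 ≤ e.card) with hA3d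
      have hperv : ∀ v ∈ V, ((A3.filter (fun e => v ∈ e)).card) ≤ 16 * (n+1) := by
        intro v hv
        rcases Finset.eq_empty_or_nonempty (A3.filter (fun e => v ∈ e)) with h0 | ⟨e₀, he₀⟩
        · rw [h0]; simp
        · rw [Finset.mem_filter, hA3d, Finset.mem_filter] at he₀
          obtain ⟨⟨he₀E, he₀4⟩, hve₀⟩ := he₀
          obtain ⟨B, hBsub, hB3⟩ := Finset.exists_subset_card_eq
            (show 3 ≤ (e₀.erase v).card by rw [Finset.card_erase_of_mem hve₀]; omega)
          have hBe₀ : B ⊆ e₀ := hBsub.trans (Finset.erase_subset _ _)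
          have hvB : v ∉ B := fun h => Finset.notMem_erase v e₀ (hBsub h)
          have hclaim : ∀ e' ∈ A3.filter (fun e => v ∈ e), (e' \ insert v B).card ≤ 1 := by
            intro e' he'
            rw [Finset.mem_filter, hA3d, Finset.mem_filter] at he'
            obtain ⟨⟨he'E, he'4⟩, hve'⟩ := he'
            by_contra hgt
            push_neg at hgt
            obtain ⟨x, hx, y, hy, hxy⟩ := Finset.one_lt_card.mp hgt
            rw [Finset.mem_sdiff] at hx hy
            have hvx : v ≠ x := fun h => hx.2 (h ▸ Finset.mem_insert_self v B)
            have hvy : v ≠ y := fun h => hy.2 (h ▸ Finset.mem_insert_self v B)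
            apply hfree
            have hsubvxy : ({v,x,y} : Finset ℕ) ⊆ e' := by
              intro t ht
              simp only [Finset.mem_insert, Finset.mem_singleton] at ht
              rcases ht with rfl | rfl | rfl
              · exact hve'
              · exact hx.1
              · exact hy.1
            apply copy_of_triples hH (hH.2.2 e' he'E _ hsubvxy) ?_
              (Finset.mem_insert_self _ _) (hH.2.2 e₀ he₀E B hBe₀) hB3 ?_ ?_
            · rw [Finset.card_insert_of_notMem (by simp [hvx, hvy]),
                Finset.card_insert_of_notMem (by simp [hxy]), Finset.card_singleton]
            · intro t ht htB
              simp only [Finset.mem_insert, Finset.mem_singleton] at ht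
              rcases ht with rfl | rfl | rfl
              · exact hvB htB
              · exact hx.2 (Finset.mem_insert_of_mem htB)
              · exact hy.2 (Finset.mem_insert_of_mem htB)
            · intro u huB
              apply hH.2.2 e₀ he₀E
              intro t ht
              simp only [Finset.mem_insert, Finset.mem_singleton] at ht
              rcases ht with rfl | rfl
              · exact hve₀
              · exact hBe₀ huB
          have hmap : ∀ e' ∈ A3.filter (fun e => v ∈ e),
              (e' ∩ insert v B, e' \ insert v B) ∈
                (insert v B).powerset ×ˢ (insert ∅ (V.image (fun u => ({u} : Finset ℕ)))) := by
            intro e' he'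
            refine Finset.mem_product.mpr ⟨Finset.mem_powerset.mpr Finset.inter_subset_right, ?_⟩
            have hc := hclaim e' he'
            rcases Nat.lt_or_ge (e' \ insert v B).card 1 with h0 | h1
            · have : e' \ insert v B = ∅ := Finset.card_eq_zero.mp (by omega)
              rw [this]; exact Finset.mem_insert_self _ _
            · have : (e' \ insert v B).card = 1 := by omega
              obtain ⟨u, hu⟩ := Finset.card_eq_one.mp this
              rw [hu]
              apply Finset.mem_insert_of_mem
              apply Finset.mem_image.mpr
              refine ⟨u, ?_, rfl⟩
              have : u ∈ e' \ insert v B := hu ▸ Finset.mem_singleton_self u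
              rw [Finset.mem_filter, hA3d, Finset.mem_filter] at he'
              exact hV ▸ H.subset_verts _ he'.1.1 (Finset.mem_sdiff.mp this).1
          have hinj : ∀ e₁ ∈ A3.filter (fun e => v ∈ e), ∀ e₂ ∈ A3.filter (fun e => v ∈ e),
              (e₁ ∩ insert v B, e₁ \ insert v B) = (e₂ ∩ insert v B, e₂ \ insert v B)
              → e₁ = e₂ := by
            intro e₁ _ e₂ _ heq
            have h1 := congrArg Prod.fst heq
            have h2 := congrArg Prod.snd heq
            simp only at h1 h2
            rw [← inter_union_sdiff' e₁ (insert v B), ← inter_union_sdiff' e₂ (insert v B),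
              h1, h2]
          calc (A3.filter (fun e => v ∈ e)).card
              ≤ ((insert v B).powerset ×ˢ (insert ∅ (V.image (fun u => ({u} : Finset ℕ))))).card :=
                Finset.card_le_card_of_injOn _ hmap hinj
            _ = (insert v B).powerset.card * (insert ∅ (V.image (fun u => ({u} : Finset ℕ)))).card :=
                Finset.card_product _ _
            _ ≤ 16 * (n + 1) := by
                apply Nat.mul_le_mul
                · rw [Finset.card_powerset, Finset.card_insert_of_notMem hvB, hB3]
                  norm_num
                · calc (insert ∅ (V.image (fun u => ({u} : Finset ℕ)))).card
                      ≤ (V.image (fun u => ({u} : Finset ℕ))).card + 1 := Finset.card_insert_le _ _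
                    _ ≤ V.card + 1 := by
                        have := Finset.card_image_le (s := V) (f := fun u => ({u} : Finset ℕ))
                        omega
                    _ = n + 1 := by rw [← hn]
      have hdc : ∑ v ∈ V, ((A3.filter (fun e => v ∈ e)).card) = ∑ e ∈ A3, e.card := by
        rw [double_count V A3 (fun v e => v ∈ e)]
        refine Finset.sum_congr rfl (fun e he => ?_)
        rw [Finset.filter_mem_eq_inter, Finset.inter_eq_right.mpr ?_]
        rw [hA3d, Finset.mem_filter] at he
        exact hV ▸ H.subset_verts _ he.1
      have h4le : 4 * A3.card ≤ ∑ e ∈ A3, e.card := by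
        calc 4 * A3.card = ∑ _e ∈ A3, 4 := by rw [Finset.sum_const, smul_eq_mul, mul_comm]
          _ ≤ ∑ e ∈ A3, e.card := by
              refine Finset.sum_le_sum (fun e he => ?_)
              rw [hA3d, Finset.mem_filter] at he
              exact he.2
      have hub : ∑ v ∈ V, ((A3.filter (fun e => v ∈ e)).card) ≤ n * (16 * (n+1)) := by
        calc ∑ v ∈ V, ((A3.filter (fun e => v ∈ e)).card) ≤ V.card • (16 * (n+1)) :=
            Finset.sum_le_card_nsmul _ _ _ hperv
          _ = n * (16 * (n+1)) := by rw [smul_eq_mul, ← hn]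
      have : 4 * A3.card ≤ 16 * (n * (n+1)) := by
        calc 4 * A3.card ≤ n * (16 * (n+1)) := le_trans h4le (hdc ▸ hub)
          _ = 4 * (4 * (n * (n+1))) := by ring
          _ = 16 * (n * (n+1)) := by ring
      omega
    have hdecomp : H.edges.card ≤ (H.edges.filter (fun e => e.card ≤ 2)).card + E3.card
        + (H.edges.filter (fun e => 4 ≤ e.card)).card := by
      have hsub : H.edges ⊆ (H.edges.filter (fun e => e.card ≤ 2)) ∪
          (E3 ∪ (H.edges.filter (fun e => 4 ≤ e.card))) := by
        intro e he
        rcases Nat.lt_or_ge e.card 3 with h1 | h2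
        · exact Finset.mem_union_left _ (Finset.mem_filter.mpr ⟨he, by omega⟩)
        · rcases Nat.eq_or_lt_of_le h2 with h3 | h4
          · exact Finset.mem_union_right _ (Finset.mem_union_left _
              (by rw [hE3, Finset.mem_filter]; exact ⟨he, h3.symm⟩))
          · exact Finset.mem_union_right _ (Finset.mem_union_right _
              (Finset.mem_filter.mpr ⟨he, by omega⟩))
      calc H.edges.card ≤ _ := Finset.card_le_card hsub
        _ ≤ (H.edges.filter (fun e => e.card ≤ 2)).card
            + (E3 ∪ (H.edges.filter (fun e => 4 ≤ e.card))).card := Finset.card_union_le _ _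
        _ ≤ _ := by
            have := Finset.card_union_le E3 (H.edges.filter (fun e => 4 ≤ e.card))
            omega
    have hnn : (1 + n + n^2) + (E3W.card + 3 * n^2) + 4 * (n * (n+1))
        ≤ E3W.card + 13 * (n + 1)^2 := by nlinarith
    omega
lemma layer_edges_iff : ∀ e ∈ (F2.layer 3).edges, e = ({1,2,3} : Finset ℕ) ∨ e = {4,5,6} := by
  decide

lemma layer_copy_builder {G : NHypergraph}
    {a b c d e g : ℕ}
    (hab : a ≠ b) (hac : a ≠ c) (hbc : b ≠ c)
    (hde : d ≠ e) (hdg : d ≠ g) (heg : e ≠ g)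
    (had : a ≠ d) (hae : a ≠ e) (hag : a ≠ g)
    (hbd : b ≠ d) (hbe : b ≠ e) (hbg : b ≠ g)
    (hcd : c ≠ d) (hce : c ≠ e) (hcg : c ≠ g)
    (h1 : ({a,b,c} : Finset ℕ) ∈ G.edges) (h2 : ({d,e,g} : Finset ℕ) ∈ G.edges) :
    G.ContainsCopy (F2.layer 3) := by
  refine ⟨sixFun a b c d e g, ?_, ?_, ?_⟩
  · intro x hx y hy hxy
    have hv : (F2.layer 3).verts = ({1,2,3,4,5,6} : Finset ℕ) := by decide
    rw [hv] at hx hy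
    simp only [Finset.coe_insert, Set.mem_insert_iff, Finset.coe_singleton,
      Set.mem_singleton_iff] at hx hy
    rcases hx with rfl|rfl|rfl|rfl|rfl|rfl <;> rcases hy with rfl|rfl|rfl|rfl|rfl|rfl <;>
      simp_all [sixFun]
  · intro i hi
    have hv : (F2.layer 3).verts = ({1,2,3,4,5,6} : Finset ℕ) := by decide
    rw [hv] at hi
    have ha : a ∈ G.verts := G.subset_verts _ h1 (by simp)
    have hb : b ∈ G.verts := G.subset_verts _ h1 (by simp)
    have hc : c ∈ G.verts := G.subset_verts _ h1 (by simp)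
    have hd : d ∈ G.verts := G.subset_verts _ h2 (by simp)
    have he' : e ∈ G.verts := G.subset_verts _ h2 (by simp)
    have hg' : g ∈ G.verts := G.subset_verts _ h2 (by simp)
    fin_cases hi <;> simpa [sixFun]
  · intro e' he'
    rcases layer_edges_iff e' he' with rfl | rfl
    · simpa [Finset.image_insert, sixFun] using h1
    · simpa [Finset.image_insert, sixFun] using h2

/-- in a (F2.layer 3)-free hypergraph, 3-edges pairwise intersect -/
lemma edges_intersect {G : NHypergraph} (hfree : ¬ G.ContainsCopy (F2.layer 3))
    {f₁ f₂ : Finset ℕ} (h₁ : f₁ ∈ G.edges) (h₂ : f₂ ∈ G.edges)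
    (hc₁ : f₁.card = 3) (hc₂ : f₂.card = 3) :
    ∃ x ∈ f₁, x ∈ f₂ := by
  by_contra hcon
  push_neg at hcon
  obtain ⟨a, b, c, hab, hac, hbc, rfl⟩ := Finset.card_eq_three.mp hc₁
  obtain ⟨d, e, g, hde, hdg, heg, rfl⟩ := Finset.card_eq_three.mp hc₂
  apply hfree
  have hmem : ∀ x ∈ ({a,b,c} : Finset ℕ), ∀ y ∈ ({d,e,g} : Finset ℕ), x ≠ y := by
    intro x hx y hy h
    exact hcon x hx (h ▸ hy)
  exact layer_copy_builder hab hac hbc hde hdg heg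
    (hmem a (by simp) d (by simp)) (hmem a (by simp) e (by simp)) (hmem a (by simp) g (by simp))
    (hmem b (by simp) d (by simp)) (hmem b (by simp) e (by simp)) (hmem b (by simp) g (by simp))
    (hmem c (by simp) d (by simp)) (hmem c (by simp) e (by simp)) (hmem c (by simp) g (by simp))
    h₁ h₂

lemma cliquePlus_bound {G : NHypergraph} (hG3 : G.IsUniform 3)
    (hfree : ¬ G.ContainsCopy (F2.layer 3)) :
    G.cliquePlusCount 3 ≤ 12 * (G.verts.card + 1)^2 := by
  classical
  set n := G.verts.card with hn
  set S := G.verts.powerset.filter (fun T => G.IsCliqueIn 3 T ∧ 3 ≤ T.card) with hS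
  have hset : {T : Finset ℕ | G.IsCliqueIn 3 T ∧ 3 ≤ T.card} = ↑S := by
    ext T
    simp only [Set.mem_setOf_eq, hS, Finset.coe_filter, Finset.mem_powerset]
    constructor
    · intro h; exact ⟨h.1.1, h⟩
    · intro h; exact h.2
  have hcount : G.cliquePlusCount 3 = S.card := by
    rw [NHypergraph.cliquePlusCount, hset, Set.ncard_coe_finset]
  rw [hcount]
  rcases Finset.eq_empty_or_nonempty G.edges with hems | ⟨e₀, he₀⟩
  · have : S = ∅ := by
      rw [Finset.eq_empty_iff_forall_notMem]
      intro T hT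
      rw [hS, Finset.mem_filter] at hT
      obtain ⟨_, hclq, hcard⟩ := hT
      rcases hclq.2 with h1 | ⟨e, he, _⟩ | h3
      · omega
      · rw [hems] at he; exact absurd he (Finset.notMem_empty e)
      · obtain ⟨Q, hQsub, hQ3⟩ := Finset.exists_subset_card_eq (show 3 ≤ T.card from hcard)
        have := h3 Q (Finset.mem_powersetCard.mpr ⟨hQsub, hQ3⟩)
        rw [hems] at this; exact absurd this (Finset.notMem_empty Q)
    rw [this]; simp
  · have he₀3 : e₀.card = 3 := hG3 _ he₀
    -- all cliques T (card ≥ 4) have all 3-subsets as edges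
    have hbig : ∀ T ∈ S, 4 ≤ T.card → ∀ Q ⊆ T, Q.card = 3 → Q ∈ G.edges := by
      intro T hT h4 Q hQsub hQ3
      rw [hS, Finset.mem_filter] at hT
      obtain ⟨_, hclq, _⟩ := hT
      rcases hclq.2 with h1 | ⟨e, he, hTe⟩ | h3
      · omega
      · have := Finset.card_le_card hTe
        rw [hG3 _ he] at this; omega
      · exact h3 Q (Finset.mem_powersetCard.mpr ⟨hQsub, hQ3⟩)
    -- cliques with card ≥ 4 have ≤ 2 vertices outside e₀
    have hout : ∀ T ∈ S, 4 ≤ T.card → (T \ e₀).card ≤ 2 := by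
      intro T hT h4
      by_contra hgt
      push_neg at hgt
      obtain ⟨Q, hQsub, hQ3⟩ := Finset.exists_subset_card_eq (show 3 ≤ (T \ e₀).card by omega)
      have hQedge : Q ∈ G.edges := hbig T hT h4 Q (hQsub.trans (Finset.sdiff_subset)) hQ3
      obtain ⟨x, hxQ, hxe₀⟩ := edges_intersect hfree hQedge he₀ hQ3 he₀3
      exact (Finset.mem_sdiff.mp (hQsub hxQ)).2 hxe₀
    -- card ≥ 6 impossible
    have hsix : ∀ T ∈ S, T.card ≤ 5 := by
      intro T hT
      by_contra hgt
      push_neg at hgt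
      obtain ⟨Q₁, hQ₁sub, hQ₁3⟩ := Finset.exists_subset_card_eq (show 3 ≤ T.card by omega)
      have h2 : 3 ≤ (T \ Q₁).card := by rw [Finset.card_sdiff_of_subset hQ₁sub, hQ₁3]; omega
      obtain ⟨Q₂, hQ₂sub, hQ₂3⟩ := Finset.exists_subset_card_eq h2
      have he₁ : Q₁ ∈ G.edges := hbig T hT (by omega) Q₁ hQ₁sub hQ₁3
      have he₂ : Q₂ ∈ G.edges := hbig T hT (by omega) Q₂
        (hQ₂sub.trans (Finset.sdiff_subset)) hQ₂3
      obtain ⟨x, hx₁, hx₂⟩ := edges_intersect hfree he₁ he₂ hQ₁3 hQ₂3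
      exact (Finset.mem_sdiff.mp (hQ₂sub hx₂)).2 hx₁
    -- split S
    have hsplit := Finset.card_filter_add_card_filter_not
      (s := S) (p := fun T => T.card ≤ 3)
    -- part 1 : triples are edges
    have hS3 : (S.filter (fun T => T.card ≤ 3)).card ≤ 3 * n^2 := by
      have hsub1 : S.filter (fun T => T.card ≤ 3) ⊆ G.edges := by
        intro T hT
        rw [Finset.mem_filter] at hT
        obtain ⟨hTS, hle⟩ := hT
        rw [hS, Finset.mem_filter] at hTS
        obtain ⟨_, hclq, hge⟩ := hTS
        have hc3 : T.card = 3 := by omega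
        rcases hclq.2 with h1 | ⟨e, he, hTe⟩ | h3
        · omega
        · have he3 := hG3 _ he
          rw [Finset.eq_of_subset_of_card_le hTe (by omega)]
          exact he
        · exact h3 T (Finset.mem_powersetCard.mpr ⟨Finset.Subset.refl T, hc3⟩)
      have hsub2 : G.edges ⊆ e₀.biUnion (fun x => G.edges.filter (fun f => x ∈ f)) := by
        intro f hf
        obtain ⟨x, hxf, hxe₀⟩ := edges_intersect hfree hf he₀ (hG3 _ hf) he₀3
        exact Finset.mem_biUnion.mpr ⟨x, hxe₀, Finset.mem_filter.mpr ⟨hf, hxf⟩⟩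
      have hperx : ∀ x ∈ e₀, (G.edges.filter (fun f => x ∈ f)).card ≤ n^2 := by
        intro x _
        have hmapx : ∀ f ∈ G.edges.filter (fun f => x ∈ f), f.erase x ∈ G.verts.powersetCard 2 := by
          intro f hf
          rw [Finset.mem_filter] at hf
          refine Finset.mem_powersetCard.mpr ⟨?_, ?_⟩
          · exact (Finset.erase_subset _ _).trans (G.subset_verts _ hf.1)
          · rw [Finset.card_erase_of_mem hf.2, hG3 _ hf.1]
        have hinjx : ∀ f₁ ∈ G.edges.filter (fun f => x ∈ f), ∀ f₂ ∈ G.edges.filter (fun f => x ∈ f),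
            f₁.erase x = f₂.erase x → f₁ = f₂ := by
          intro f₁ h₁ f₂ h₂ heq
          rw [← Finset.insert_erase (Finset.mem_filter.mp h₁).2,
            ← Finset.insert_erase (Finset.mem_filter.mp h₂).2, heq]
        calc (G.edges.filter (fun f => x ∈ f)).card ≤ (G.verts.powersetCard 2).card :=
            Finset.card_le_card_of_injOn _ hmapx hinjx
          _ = n.choose 2 := by rw [Finset.card_powersetCard, hn]
          _ ≤ n^2 := Nat.choose_le_pow _ _
      calc (S.filter (fun T => T.card ≤ 3)).card ≤ G.edges.card := Finset.card_le_card hsub1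
        _ ≤ ∑ x ∈ e₀, (G.edges.filter (fun f => x ∈ f)).card :=
            le_trans (Finset.card_le_card hsub2) Finset.card_biUnion_le
        _ ≤ e₀.card • n^2 := Finset.sum_le_card_nsmul _ _ _ hperx
        _ = 3 * n^2 := by rw [he₀3, smul_eq_mul]
    -- part 2 : big cliques
    have hS45 : (S.filter (fun T => ¬ T.card ≤ 3)).card ≤ 8 * (1 + n + n^2) := by
      set SB := S.filter (fun T => ¬ T.card ≤ 3) with hSB
      have hmapB : ∀ T ∈ SB, (T ∩ e₀, T \ e₀) ∈
          e₀.powerset ×ˢ (insert ∅ ((G.verts.powersetCard 1) ∪ (G.verts.powersetCard 2))) := by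
        intro T hT
        rw [hSB, Finset.mem_filter] at hT
        refine Finset.mem_product.mpr ⟨Finset.mem_powerset.mpr Finset.inter_subset_right, ?_⟩
        show T \ e₀ ∈ insert ∅ ((G.verts.powersetCard 1) ∪ (G.verts.powersetCard 2))
        have hο := hout T hT.1 (by omega)
        have hTV : T ⊆ G.verts := by
          have := hT.1
          rw [hS, Finset.mem_filter] at this
          exact Finset.mem_powerset.mp this.1
        rcases Nat.lt_or_ge (T \ e₀).card 1 with h0 | h1
        · have : T \ e₀ = ∅ := Finset.card_eq_zero.mp (by omega)
          rw [this]; exact Finset.mem_insert_self _ _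
        · apply Finset.mem_insert_of_mem
          rcases Nat.eq_or_lt_of_le h1 with h1' | h2
          · exact Finset.mem_union_left _ (Finset.mem_powersetCard.mpr
              ⟨(Finset.sdiff_subset).trans hTV, h1'.symm⟩)
          · exact Finset.mem_union_right _ (Finset.mem_powersetCard.mpr
              ⟨(Finset.sdiff_subset).trans hTV, by omega⟩)
      have hinjB : ∀ T₁ ∈ SB, ∀ T₂ ∈ SB,
          (T₁ ∩ e₀, T₁ \ e₀) = (T₂ ∩ e₀, T₂ \ e₀) → T₁ = T₂ := by
        intro T₁ _ T₂ _ heq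
        have h1 := congrArg Prod.fst heq
        have h2 := congrArg Prod.snd heq
        simp only at h1 h2
        rw [← inter_union_sdiff' T₁ e₀, ← inter_union_sdiff' T₂ e₀, h1, h2]
      calc SB.card ≤ (e₀.powerset ×ˢ (insert ∅ ((G.verts.powersetCard 1) ∪
            (G.verts.powersetCard 2)))).card := Finset.card_le_card_of_injOn _ hmapB hinjB
        _ = e₀.powerset.card * (insert ∅ ((G.verts.powersetCard 1) ∪
            (G.verts.powersetCard 2))).card := Finset.card_product _ _
        _ ≤ 8 * (1 + n + n^2) := by
            apply Nat.mul_le_mul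
            · rw [Finset.card_powerset, he₀3]; norm_num
            · have hu := Finset.card_union_le (G.verts.powersetCard 1) (G.verts.powersetCard 2)
              have e1 : (G.verts.powersetCard 1).card = n := by
                rw [Finset.card_powersetCard, hn, Nat.choose_one_right]
              have e2 : (G.verts.powersetCard 2).card ≤ n^2 := by
                rw [Finset.card_powersetCard, hn]
                exact Nat.choose_le_pow _ _
              have := Finset.card_insert_le (∅ : Finset ℕ)
                ((G.verts.powersetCard 1) ∪ (G.verts.powersetCard 2))
              omega
    have hfin : 3 * n^2 + 8 * (1 + n + n^2) ≤ 12 * (n+1)^2 := by nlinarith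
    omega

lemma exClPlus_le (n : ℕ) : exClPlus 3 n {F2.layer 3} ≤ 12 * (n + 1)^2 := by
  apply csSup_le
  · refine ⟨0, ⟨⟨Finset.range n, ∅, by simp⟩, ?_, Finset.card_range n, ?_, ?_⟩⟩
    · intro e he; exact absurd he (Finset.notMem_empty e)
    · intro Hf hHf hcopy
      obtain ⟨f, _, _, hedge⟩ := hcopy
      rw [Set.mem_singleton_iff] at hHf
      subst hHf
      have h123 : ({1,2,3} : Finset ℕ) ∈ (F2.layer 3).edges := by decide
      exact absurd (hedge _ h123) (Finset.notMem_empty _)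
    · rw [NHypergraph.cliquePlusCount]
      convert Set.ncard_empty (Finset ℕ) using 2
      rw [Set.eq_empty_iff_forall_notMem]
      intro T hT
      obtain ⟨⟨_, hclq⟩, hcard⟩ := hT
      rcases hclq with h1 | ⟨e, he, _⟩ | h3
      · omega
      · exact absurd he (Finset.notMem_empty e)
      · obtain ⟨Q, hQsub, hQ3⟩ := Finset.exists_subset_card_eq (show 3 ≤ T.card from hcard)
        exact absurd (h3 Q (Finset.mem_powersetCard.mpr ⟨hQsub, hQ3⟩))
          (Finset.notMem_empty Q)
  · rintro m ⟨G, hG3, hGn, hGfree, rfl⟩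
    have := cliquePlus_bound hG3 (hGfree _ (Set.mem_singleton _))
    rw [hGn] at this
    exact this
lemma exSC_set_nonempty (n : ℕ) : {m | ∃ H : NHypergraph, IsSimplicialComplex H ∧
    H.verts.card = n ∧ ¬ H.ContainsCopy F2 ∧ H.edges.card = m}.Nonempty :=
  ⟨(tripComplex n).edges.card, tripComplex n, genComplex_isSC _,
    by rw [tripComplex_verts]; exact Finset.card_range n, tripComplex_free n, rfl⟩

lemma exSC_upper (n K : ℕ) (hK : 4 ≤ K) :
    (exSC n F2 : ℝ) ≤ (n:ℝ)^3/27 + (n:ℝ)^3/9 * (1/((K:ℝ)-3))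
      + ((K:ℝ)^3 + 13*((n:ℝ)+1)^2) := by
  have hmem : exSC n F2 ∈ {m | ∃ H : NHypergraph, IsSimplicialComplex H ∧
      H.verts.card = n ∧ ¬ H.ContainsCopy F2 ∧ H.edges.card = m} :=
    Nat.sSup_mem (exSC_set_nonempty n) (exSC_set_bddAbove n F2)
  obtain ⟨H, hH, hn, hfree, hcard⟩ := hmem
  obtain ⟨w, m3, hwn, hm3w, hmain, htot⟩ := core_bound hH hfree
  rw [hn] at hwn htot
  rw [hcard] at htot
  have hK3 : (0:ℝ) < (K:ℝ) - 3 := by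
    have : (4:ℝ) ≤ (K:ℝ) := by exact_mod_cast hK
    linarith
  have hm3R : (m3:ℝ) ≤ (n:ℝ)^3/27 + (n:ℝ)^3/9 * (1/((K:ℝ)-3)) + (K:ℝ)^3 := by
    rcases le_or_gt w K with hwK | hKw
    · have h1 : m3 ≤ K^3 := le_trans hm3w (Nat.pow_le_pow_left hwK 3)
      have h1R : (m3:ℝ) ≤ (K:ℝ)^3 := by exact_mod_cast h1
      have h2 : (0:ℝ) ≤ (n:ℝ)^3/27 := by positivity
      have h3 : (0:ℝ) ≤ (n:ℝ)^3/9 * (1/((K:ℝ)-3)) := by positivity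
      linarith
    · have h3w : 3 ≤ w := by omega
      have hw3 : (0:ℝ) < (w:ℝ) - 3 := by
        have : (4:ℝ) ≤ (w:ℝ) := by exact_mod_cast (by omega : 4 ≤ w)
        linarith
      have hmR : (27:ℝ) * (((w:ℝ) - 3) * (m3:ℝ)) ≤ ((w:ℝ))^4 := by
        have hcast := (Nat.cast_le (α := ℝ)).mpr hmain
        push_cast [Nat.cast_sub h3w] at hcast
        linarith
      have hdiv : (m3:ℝ) ≤ (w:ℝ)^4 / (27*((w:ℝ)-3)) := by
        rw [le_div_iff₀ (by positivity)]
        nlinarith [hmR]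
      have hid : (w:ℝ)^4 / (27*((w:ℝ)-3)) = (w:ℝ)^3/27 + (w:ℝ)^3/9 * (1/((w:ℝ)-3)) := by
        field_simp
        ring
      have hwle : ((w:ℝ))^3 ≤ ((n:ℝ))^3 := by
        have : (w:ℝ) ≤ (n:ℝ) := by exact_mod_cast hwn
        exact pow_le_pow_left₀ (by positivity) this 3
      have hfrac : 1/((w:ℝ)-3) ≤ 1/((K:ℝ)-3) := by
        apply one_div_le_one_div_of_le hK3
        have : (K:ℝ) ≤ (w:ℝ) := by exact_mod_cast le_of_lt hKw
        linarith
      have hterm : (w:ℝ)^3/9 * (1/((w:ℝ)-3)) ≤ (n:ℝ)^3/9 * (1/((K:ℝ)-3)) := by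
        apply mul_le_mul (by linarith [hwle]) hfrac (by positivity) (by positivity)
      have hK3' : (0:ℝ) ≤ (K:ℝ)^3 := by positivity
      calc (m3:ℝ) ≤ (w:ℝ)^4 / (27*((w:ℝ)-3)) := hdiv
        _ = (w:ℝ)^3/27 + (w:ℝ)^3/9 * (1/((w:ℝ)-3)) := hid
        _ ≤ (n:ℝ)^3/27 + (n:ℝ)^3/9 * (1/((K:ℝ)-3)) + (K:ℝ)^3 := by
            have : (w:ℝ)^3/27 ≤ (n:ℝ)^3/27 := by linarith [hwle]
            linarith
  have htotR : (exSC n F2 : ℝ) ≤ (m3:ℝ) + 13*((n:ℝ)+1)^2 := by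
    have := (Nat.cast_le (α := ℝ)).mpr htot
    push_cast at this
    linarith
  linarith
set_option maxHeartbeats 1000000

theorem F2_nontrivial :
    ¬ IsTrivialSC 3 (genComplex {({1,2,3} : Finset ℕ), {4,5,6}, {1,4}, {1,5}, {1,6}}) ∧
      (fun n : ℕ =>
          (exSC n (genComplex {({1,2,3} : Finset ℕ), {4,5,6}, {1,4}, {1,5}, {1,6}}) : ℝ) -
            (n : ℝ) ^ 3 / 27)
        =o[Filter.atTop] fun n : ℕ => (n : ℝ) ^ 3 := by
  constructor
  · intro htriv
    have htriv' : ∀ᶠ n in Filter.atTop, exSC n F2 = exClPlus 3 n {F2.layer 3}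
        + ∑ r ∈ Finset.range 3, n.choose r := htriv
    obtain ⟨n, heq, hge⟩ := (htriv'.and (Filter.eventually_ge_atTop 100000)).exists
    have hlow := exSC_lower n
    have hup := exClPlus_le n
    have hsum : ∑ r ∈ Finset.range 3, n.choose r ≤ 1 + n + n^2 := by
      rw [Finset.sum_range_succ, Finset.sum_range_succ, Finset.sum_range_one]
      have h2 := Nat.choose_le_pow n 2
      rw [Nat.choose_zero_right, Nat.choose_one_right]
      omega
    have harith : 12 * (n+1)^2 + (1 + n + n^2) < (n/3)^3 := by
      have hdiv : n ≤ 3 * (n/3) + 2 := by omega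
      set a := n / 3 with ha
      have ha' : 33332 ≤ a := by omega
      have h1 : n + 1 ≤ 3*a + 3 := by omega
      have h2 : (n+1)^2 ≤ (3*a+3)^2 := Nat.pow_le_pow_left h1 2
      have h3 : n^2 ≤ (3*a+2)^2 := Nat.pow_le_pow_left (by omega) 2
      have hcube : 33332 * a^2 ≤ a^3 := by nlinarith [ha']
      nlinarith [h2, h3, hcube, ha', hdiv]
    omega
  · rw [Asymptotics.isLittleO_iff]
    intro c hc
    set K : ℕ := 4 + ⌈1/c⌉₊ with hKdef
    have hK4 : 4 ≤ K := by omega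
    have hcinv : (0:ℝ) < 1/c := by positivity
    have hKc : 1/c ≤ (K:ℝ) - 3 := by
      have h1 := Nat.le_ceil (1/c)
      have h2 : ((⌈1/c⌉₊ : ℕ):ℝ) + 4 = (K:ℝ) := by
        rw [hKdef]; push_cast; ring
      linarith
    have hKc' : 1/((K:ℝ) - 3) ≤ c := by
      have h1 : (0:ℝ) < (K:ℝ) - 3 := lt_of_lt_of_le hcinv hKc
      rw [div_le_iff₀ h1]
      rw [div_le_iff₀ hc] at hKc
      linarith
    obtain ⟨N₀, hN₀⟩ := exists_nat_ge (3*((K:ℝ)^3 + 52)/c + 1/c + 2)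
    filter_upwards [Filter.eventually_ge_atTop N₀] with n hnN
    have hnR : 3*((K:ℝ)^3 + 52)/c + 1/c + 2 ≤ (n:ℝ) :=
      le_trans hN₀ (by exact_mod_cast hnN)
    have hKpos : (0:ℝ) ≤ (K:ℝ)^3 := by positivity
    have hdivpos : (0:ℝ) < 3*((K:ℝ)^3 + 52)/c := by positivity
    have hn2R : (2:ℝ) ≤ (n:ℝ) := by linarith
    have hn2 : 2 ≤ n := by exact_mod_cast hn2R
    have hnc1 : 1 ≤ c * (n:ℝ) := by
      rw [div_le_iff₀ hc] at hKc
      have h1 : 1/c ≤ (n:ℝ) := by linarith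
      rw [div_le_iff₀ hc] at h1
      linarith
    -- upper bound
    have hupper := exSC_upper n K hK4
    have e2 : (n:ℝ)^3/9 * (1/((K:ℝ)-3)) ≤ c * (n:ℝ)^3/9 := by
      have hnn : (0:ℝ) ≤ (n:ℝ)^3/9 := by positivity
      calc (n:ℝ)^3/9 * (1/((K:ℝ)-3)) ≤ (n:ℝ)^3/9 * c := mul_le_mul_of_nonneg_left hKc' hnn
        _ = c * (n:ℝ)^3/9 := by ring
    have e3 : 13*((n:ℝ)+1)^2 ≤ 52*(n:ℝ)^2 := by nlinarith [hn2R]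
    have e4 : (K:ℝ)^3 ≤ (K:ℝ)^3 * (n:ℝ)^2 := by nlinarith [hn2R, hKpos]
    have e5 : ((K:ℝ)^3 + 52) * (n:ℝ)^2 ≤ (c/3) * (n:ℝ)^3 := by
      have h : 3*((K:ℝ)^3 + 52)/c ≤ (n:ℝ) := by linarith
      rw [div_le_iff₀ hc] at h
      nlinarith [h, sq_nonneg (n:ℝ)]
    have hub : (exSC n F2 : ℝ) - (n:ℝ)^3/27 ≤ c * (n:ℝ)^3 := by
      have hcn3 : (0:ℝ) ≤ c * (n:ℝ)^3 := by positivity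
      linarith [hupper, e2, e3, e4, e5, hcn3]
    -- lower bound
    have hlower : ((n:ℝ) - 2)^3/27 ≤ (exSC n F2 : ℝ) := by
      have h1 : (n/3)^3 ≤ exSC n F2 := exSC_lower n
      have h2 : (n:ℝ) - 2 ≤ 3*((n/3 : ℕ):ℝ) := by
        have hd : (n:ℝ) ≤ 3*((n/3:ℕ):ℝ) + 2 := by
          exact_mod_cast (show n ≤ 3*(n/3)+2 by omega)
        linarith
      have hpos : (0:ℝ) ≤ (n:ℝ) - 2 := by linarith
      have h3 : ((n:ℝ)-2)^3 ≤ (3*((n/3:ℕ):ℝ))^3 := pow_le_pow_left₀ hpos h2 3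
      have h4 : (((n/3:ℕ):ℝ))^3 ≤ (exSC n F2 : ℝ) := by exact_mod_cast h1
      calc ((n:ℝ)-2)^3/27 ≤ (3*((n/3:ℕ):ℝ))^3/27 := by linarith
        _ = (((n/3:ℕ):ℝ))^3 := by ring
        _ ≤ _ := h4
    have hlb : -(c * (n:ℝ)^3) ≤ (exSC n F2 : ℝ) - (n:ℝ)^3/27 := by
      have h1 : (n:ℝ)^3/27 - ((n:ℝ)-2)^3/27 ≤ (n:ℝ)^2 := by nlinarith [hn2R]
      have h2 : (n:ℝ)^2 ≤ c * (n:ℝ)^3 := by nlinarith [hnc1, sq_nonneg (n:ℝ)]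
      linarith
    rw [Real.norm_eq_abs, Real.norm_eq_abs, abs_of_nonneg (by positivity : (0:ℝ) ≤ (n:ℝ)^3)]
    rw [abs_le]
    exact ⟨hlb, hub⟩
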